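/- arXiv:1410.8612 — 8 statements merged into one kernel-verified Lean document; each statement's English description precedes it below -/
import Mathlib

section
/- If P ∈ ℚ[d] and Q ∈ ℚ[d] each admit a Gotzmann representation, then the polynomial P + Q admits a Gotzmann representation. -/
open Polynomial

/-- The binomial coefficient polynomial `d ↦ C(d + c, j)`,
i.e. `(d+c)(d+c-1)⋯(d+c-j+1)/j!` as a polynomial in `d` over `ℚ`. -/
noncomputable def binomPoly (c : ℤ) (j : ℕ) : Polynomial ℚ :=
  (j.factorial : ℚ)⁻¹ • ∏ k ∈ Finset.range j, (X + C ((c : ℚ) - (k : ℚ)))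

/-- `a = [a_1, …, a_s]` (0-indexed in Lean) is a Gotzmann representation of `P`:
`a_1 ≥ a_2 ≥ ⋯ ≥ a_s ≥ 0` and `P(d) = ∑_{i=1}^s C(d + a_i - (i-1), a_i)`. -/
def IsGotzmannRep (P : Polynomial ℚ) (a : List ℕ) : Prop :=
  a.Pairwise (· ≥ ·) ∧
  P = ∑ i ∈ Finset.range a.length, binomPoly ((a.getD i 0 : ℤ) - (i : ℤ)) (a.getD i 0)

/-- `P` admits a Gotzmann representation. -/
def HasGotzmannRep (P : Polynomial ℚ) : Prop :=
  ∃ a : List ℕ, IsGotzmannRep P a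

lemma binomPoly_zero (c : ℤ) : binomPoly c 0 = 1 := by
  simp [binomPoly]

lemma binomPoly_pascal (c : ℤ) (j : ℕ) :
    binomPoly c (j+1) = binomPoly (c-1) (j+1) + binomPoly (c-1) j := by
  have hcast : ((c - 1 : ℤ) : ℚ) = (c : ℚ) - 1 := by push_cast; ring
  have h1 : ∏ k ∈ Finset.range (j+1), (X + C ((c:ℚ) - (k:ℚ))) =
      (∏ k ∈ Finset.range j, (X + C (((c-1:ℤ):ℚ) - (k:ℚ)))) * (X + C (c:ℚ)) := by
    rw [Finset.prod_range_succ']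
    congr 1
    · refine Finset.prod_congr rfl fun k _ => ?_
      rw [hcast]
      congr 1
      push_cast
      ring
    · simp
  have h2 : ∏ k ∈ Finset.range (j+1), (X + C (((c-1:ℤ):ℚ) - (k:ℚ))) =
      (∏ k ∈ Finset.range j, (X + C (((c-1:ℤ):ℚ) - (k:ℚ)))) *
        (X + C (((c-1:ℤ):ℚ) - (j:ℚ))) := Finset.prod_range_succ _ _
  unfold binomPoly
  rw [h1, h2]
  set Q := ∏ k ∈ Finset.range j, (X + C (((c-1:ℤ):ℚ) - (k:ℚ))) with hQ
  have hsplit : (X + C ((c:ℚ))) = (X + C (((c-1:ℤ):ℚ) - (j:ℚ))) + C ((j:ℚ)+1) := by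
    rw [hcast, add_assoc, ← C_add]
    congr 1
    ring
  rw [hsplit, mul_add, smul_add]
  congr 1
  rw [mul_comm, ← smul_eq_C_mul, smul_smul]
  congr 1
  have hne : (j.factorial : ℚ) ≠ 0 := Nat.cast_ne_zero.mpr j.factorial_ne_zero
  have hfact : (((j+1).factorial : ℕ) : ℚ) = ((j:ℚ)+1) * (j.factorial : ℚ) := by
    rw [Nat.factorial_succ]; push_cast; ring
  rw [hfact]
  field_simp

noncomputable def T (i v : ℕ) : Polynomial ℚ := binomPoly ((v : ℤ) - (i : ℤ)) v

noncomputable def E (i v : ℕ) : Polynomial ℚ := if v = 0 then 0 else T i (v - 1)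

lemma T_zero (i : ℕ) : T i 0 = 1 := by simp [T, binomPoly]

lemma T_pascal (i v : ℕ) : T i v = T (i+1) v + E i v := by
  cases v with
  | zero => simp [T_zero, E]
  | succ u =>
    have h := binomPoly_pascal (((u:ℤ)+1) - (i:ℤ)) u
    simp only [E, Nat.succ_ne_zero, if_false, T, Nat.add_sub_cancel]
    have e0 : ((u+1 : ℕ) : ℤ) - (i:ℤ) = ((u:ℤ)+1) - (i:ℤ) := by push_cast; ring
    have e1 : ((u+1:ℕ):ℤ) - ((i+1:ℕ):ℤ) = ((u:ℤ)+1) - (i:ℤ) - 1 := by push_cast; ring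
    have e2 : ((u:ℕ):ℤ) - (i:ℤ) = ((u:ℤ)+1) - (i:ℤ) - 1 := by push_cast; ring
    rw [e0, e1, e2, h]

noncomputable def S : List ℕ → ℕ → Polynomial ℚ
  | [], _ => 0
  | v :: t, i => T i v + S t (i+1)

noncomputable def TS : List (ℕ × ℕ) → Polynomial ℚ
  | [] => 0
  | x :: t => T x.1 x.2 + TS t

lemma TS_append (l₁ l₂ : List (ℕ × ℕ)) : TS (l₁ ++ l₂) = TS l₁ + TS l₂ := by
  induction l₁ with
  | nil => simp [TS]
  | cons x t ih => simp [TS, ih]; ring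

lemma S_append : ∀ (l₁ l₂ : List ℕ) (i : ℕ),
    S (l₁ ++ l₂) i = S l₁ i + S l₂ (i + l₁.length) := by
  intro l₁
  induction l₁ with
  | nil => intro l₂ i; simp [S]
  | cons u t ih =>
    intro l₂ i
    show T i u + S (t ++ l₂) (i+1) = (T i u + S t (i+1)) + S l₂ (i + (t.length + 1))
    rw [ih]
    have : i + 1 + t.length = i + (t.length + 1) := by omega
    rw [this]; ring

def loE (j n v : ℕ) : List (ℕ × ℕ) :=
  if v = 0 then [] else (List.range' j n).map (fun l => (l, v - 1))

lemma push (v : ℕ) : ∀ (n j : ℕ), T j v = T (j + n) v + TS (loE j n v) := by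
  intro n
  induction n with
  | zero =>
    intro j
    by_cases h : v = 0 <;> simp [loE, TS, h]
  | succ n ih =>
    intro j
    rw [T_pascal j v, ih (j+1)]
    have harr : j + 1 + n = j + (n + 1) := by omega
    have : TS (loE j (n+1) v) = E j v + TS (loE (j+1) n v) := by
      by_cases h : v = 0
      · simp [loE, TS, E, h]
      · simp only [loE, h, if_false, List.range'_succ, List.map_cons, TS, E]
    rw [this, harr]
    ring

def lo2 : List ℕ → ℕ → List (ℕ × ℕ)
  | [], _ => []
  | u :: t, i => (if u = 0 then [] else [(i, u - 1)]) ++ lo2 t (i+1)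

lemma shift : ∀ (b : List ℕ) (i : ℕ), S b i = S b (i+1) + TS (lo2 b i) := by
  intro b
  induction b with
  | nil => simp [S, lo2, TS]
  | cons u t ih =>
    intro i
    show T i u + S t (i+1) = (T (i+1) u + S t (i+2)) + TS (lo2 (u::t) i)
    rw [T_pascal i u, ih (i+1)]
    have : TS (lo2 (u::t) i) = E i u + TS (lo2 t (i+1)) := by
      by_cases h : u = 0 <;> simp [lo2, TS_append, TS, E, h]
    rw [this]
    ring

lemma lo2_val : ∀ (b : List ℕ) (i : ℕ), ∀ x ∈ lo2 b i, x.2 + 1 ∈ b := by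
  intro b
  induction b with
  | nil => simp [lo2]
  | cons u t ih =>
    intro i x hx
    simp only [lo2, List.mem_append] at hx
    rcases hx with hx | hx
    · by_cases h : u = 0
      · simp [h] at hx
      · simp [h] at hx
        subst hx
        have : u - 1 + 1 = u := by omega
        rw [this]
        exact List.mem_cons_self
    · exact List.mem_cons_of_mem _ (ih (i+1) x hx)

-- cg
def cg (l : List ℕ) (w : ℕ) : ℕ := l.countP (fun u => decide (w ≤ u))

lemma cg_nil (w : ℕ) : cg [] w = 0 := rfl

lemma cg_cons (u : ℕ) (l : List ℕ) (w : ℕ) :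
    cg (u :: l) w = cg l w + if w ≤ u then 1 else 0 := by
  simp [cg, List.countP_cons]

lemma cg_append (l₁ l₂ : List ℕ) (w : ℕ) : cg (l₁ ++ l₂) w = cg l₁ w + cg l₂ w := by
  simp [cg, List.countP_append]

lemma cg_le_length (l : List ℕ) (w : ℕ) : cg l w ≤ l.length :=
  List.countP_le_length

lemma cg_anti (l : List ℕ) {w w' : ℕ} (h : w ≤ w') : cg l w' ≤ cg l w := by
  induction l with
  | nil => simp [cg_nil]
  | cons u t ih =>
    rw [cg_cons, cg_cons]
    by_cases h1 : w' ≤ u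
    · have h2 : w ≤ u := le_trans h h1
      simp [h1, h2]; omega
    · simp [h1]
      split <;> omega

lemma cg_all (l : List ℕ) (w : ℕ) (h : ∀ x ∈ l, w ≤ x) : cg l w = l.length := by
  induction l with
  | nil => simp [cg_nil]
  | cons u t ih =>
    rw [cg_cons]
    have := h u (List.mem_cons_self)
    simp [this, ih (fun x hx => h x (List.mem_cons_of_mem _ hx))]

lemma sorted_take_drop : ∀ (a : List ℕ), a.Pairwise (· ≥ ·) → ∀ (v : ℕ),
    (∀ x ∈ a.take (cg a v), v ≤ x) ∧ (∀ x ∈ a.drop (cg a v), x < v) := by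
  intro a
  induction a with
  | nil => simp
  | cons u t ih =>
    intro hs v
    rw [List.pairwise_cons] at hs
    obtain ⟨hu, hst⟩ := hs
    by_cases h : v ≤ u
    · have hcg : cg (u::t) v = cg t v + 1 := by rw [cg_cons]; simp [h]
      rw [hcg]
      obtain ⟨ih1, ih2⟩ := ih hst v
      constructor
      · intro x hx
        rw [List.take_succ_cons] at hx
        rcases List.mem_cons.mp hx with rfl | hx
        · exact h
        · exact ih1 x hx
      · intro x hx
        rw [List.drop_succ_cons] at hx
        exact ih2 x hx
    · have h0 : cg (u::t) v = 0 := by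
        rw [cg_cons]
        have : cg t v = 0 := by
          unfold cg
          rw [List.countP_eq_zero]
          intro x hx
          simp only [decide_eq_true_eq]
          have := hu x hx
          omega
        simp [h, this]
      rw [h0]
      constructor
      · simp
      · intro x hx
        simp only [List.drop_zero] at hx
        rcases List.mem_cons.mp hx with rfl | hx
        · omega
        · have := hu x hx; omega

lemma lo2_bound : ∀ (b : List ℕ), b.Pairwise (· ≥ ·) → ∀ (i : ℕ),
    ∀ x ∈ lo2 b i, x.1 + 1 ≤ i + cg b x.2 := by
  intro b
  induction b with
  | nil => simp [lo2]
  | cons u t ih =>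
    intro hs i x hx
    rw [List.pairwise_cons] at hs
    obtain ⟨hu, hst⟩ := hs
    simp only [lo2, List.mem_append] at hx
    rcases hx with hx | hx
    · by_cases h : u = 0
      · simp [h] at hx
      · simp [h] at hx
        subst hx
        have : u - 1 ≤ u := by omega
        rw [cg_cons]
        simp [this]
    · have hb := ih hst (i+1) x hx
      have hv : x.2 + 1 ∈ t := lo2_val t (i+1) x hx
      have : x.2 ≤ u := by have := hu _ hv; omega
      rw [cg_cons]
      simp [this]
      omega

-- the step lemma
lemma step (a : List ℕ) (hs : a.Pairwise (· ≥ ·)) (j v : ℕ) (hj : j ≤ cg a v) :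
    ∃ a' L, a'.Pairwise (· ≥ ·) ∧
      (∀ w, w ≤ v → cg a w + 1 ≤ cg a' w) ∧
      (∀ x ∈ L, x.2 + 1 ≤ v) ∧
      (∀ x ∈ L, x.1 ≤ cg a' x.2) ∧
      S a' 0 = S a 0 + T j v - TS L := by
  set k := cg a v with hk
  have hkl : k ≤ a.length := cg_le_length a v
  obtain ⟨htake, hdrop⟩ := sorted_take_drop a hs v
  have hlt : (a.take k).length = k := by rw [List.length_take]; omega
  refine ⟨a.take k ++ v :: a.drop k, loE j (k-j) v ++ lo2 (a.drop k) k, ?_, ?_, ?_, ?_, ?_⟩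
  · -- sorted
    rw [List.pairwise_append]
    refine ⟨hs.sublist (List.take_sublist _ _), ?_, ?_⟩
    · rw [List.pairwise_cons]
      exact ⟨fun y hy => le_of_lt (hdrop y hy), hs.sublist (List.drop_sublist _ _)⟩
    · intro x hx y hy
      rcases List.mem_cons.mp hy with rfl | hy
      · exact htake x hx
      · exact le_trans (le_of_lt (hdrop y hy)) (htake x hx)
  · -- cg increase
    intro w hw
    conv_lhs => rw [← List.take_append_drop k a]
    rw [cg_append, cg_append, cg_cons]
    simp [hw]
  · -- L values
    intro x hx
    rcases List.mem_append.mp hx with hx | hx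
    · unfold loE at hx
      by_cases h : v = 0
      · simp [h] at hx
      · simp [h] at hx
        obtain ⟨l, hl, hxl⟩ := hx
        rw [← hxl]
        simp
        omega
    · have := lo2_val _ _ x hx
      have := hdrop _ this
      omega
  · -- L position bounds
    intro x hx
    have hcg' : ∀ w, w ≤ v → cg (a.take k ++ v :: a.drop k) w = k + 1 + cg (a.drop k) w := by
      intro w hw
      rw [cg_append, cg_cons]
      have : cg (a.take k) w = k := by
        rw [cg_all _ _ (fun x hx => le_trans hw (htake x hx)), hlt]
      rw [this]
      simp [hw]
      omega
    rcases List.mem_append.mp hx with hx | hx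
    · unfold loE at hx
      by_cases h : v = 0
      · simp [h] at hx
      · simp [h] at hx
        obtain ⟨l, hl, hxl⟩ := hx
        have hw : v - 1 ≤ v := by omega
        rw [← hxl]
        simp only []
        rw [hcg' (v-1) hw]
        omega
    · have hval := lo2_val _ _ x hx
      have hvlt := hdrop _ hval
      have hb := lo2_bound (a.drop k) (hs.sublist (List.drop_sublist _ _)) k x hx
      rw [hcg' x.2 (by omega)]
      omega
  · -- the sum identity
    have e1 : S (a.take k ++ v :: a.drop k) 0 =
        S (a.take k) 0 + (T k v + S (a.drop k) (k+1)) := by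
      rw [S_append]
      simp [S, hlt]
    have e2 : S a 0 = S (a.take k) 0 + S (a.drop k) k := by
      conv_lhs => rw [← List.take_append_drop k a]
      rw [S_append]
      simp [hlt]
    have e3 : T j v = T k v + TS (loE j (k-j) v) := by
      have := push v (k-j) j
      rwa [show j + (k - j) = k by omega] at this
    have e4 : S (a.drop k) k = S (a.drop k) (k+1) + TS (lo2 (a.drop k) k) := shift _ _
    rw [e1, e2, e3, e4, TS_append]
    ring

def hiInv : List (ℕ × ℕ) → ℕ → Prop
  | [], _ => True
  | x :: t, n => x.1 ≤ n ∧ hiInv t (n+1)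

def loInv : List (ℕ × ℕ) → (ℕ → ℕ) → Prop
  | [], _ => True
  | x :: t, f => x.1 ≤ f x.2 ∧ loInv t (fun w => if w ≤ x.2 then f w + 1 else f w)

lemma hiInv_mono : ∀ (t : List (ℕ × ℕ)) (n n' : ℕ), n ≤ n' → hiInv t n → hiInv t n' := by
  intro t
  induction t with
  | nil => intro n n' _ _; trivial
  | cons x t ih =>
    intro n n' h hh
    obtain ⟨h1, h2⟩ := hh
    exact ⟨le_trans h1 h, ih _ _ (by omega) h2⟩

lemma loInv_mono : ∀ (l : List (ℕ × ℕ)) (f g : ℕ → ℕ),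
    (∀ x ∈ l, f x.2 ≤ g x.2) → loInv l f → loInv l g := by
  intro l
  induction l with
  | nil => intro f g _ _; trivial
  | cons x t ih =>
    intro f g h hh
    obtain ⟨h1, h2⟩ := hh
    refine ⟨le_trans h1 (h x (List.mem_cons_self)), ih _ _ ?_ h2⟩
    intro y hy
    have := h y (List.mem_cons_of_mem _ hy)
    by_cases hc : y.2 ≤ x.2 <;> simp [hc] <;> omega

lemma loInv_append : ∀ (L lo : List (ℕ × ℕ)) (f : ℕ → ℕ),
    (∀ x ∈ L, x.1 ≤ f x.2) → loInv lo f → loInv (L ++ lo) f := by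
  intro L
  induction L with
  | nil => intro lo f _ h; simpa using h
  | cons x t ih =>
    intro lo f hL hlo
    refine ⟨hL x (List.mem_cons_self), ?_⟩
    apply ih
    · intro y hy
      have := hL y (List.mem_cons_of_mem _ hy)
      by_cases hc : y.2 ≤ x.2 <;> simp [hc] <;> omega
    · apply loInv_mono _ f _ _ hlo
      intro y _
      by_cases hc : y.2 ≤ x.2 <;> simp [hc]

lemma split (c : ℕ) : ∀ (lo : List (ℕ × ℕ)) (f : ℕ → ℕ), loInv lo f →
    (∀ x ∈ lo, x.2 < c + 1) →
    hiInv (lo.filter (fun x => x.2 = c)) (f c) ∧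
    loInv (lo.filter (fun x => ¬ x.2 = c)) (fun w => f w + (lo.filter (fun x => x.2 = c)).length) ∧
    TS lo = TS (lo.filter (fun x => x.2 = c)) + TS (lo.filter (fun x => ¬ x.2 = c)) ∧
    (∀ x ∈ lo.filter (fun x => ¬ x.2 = c), x.2 < c) := by
  intro lo
  induction lo with
  | nil => simp [hiInv, loInv, TS]
  | cons x t ih =>
    intro f hinv hv
    obtain ⟨h1, h2⟩ := hinv
    have hvt : ∀ y ∈ t, y.2 < c + 1 := fun y hy => hv y (List.mem_cons_of_mem _ hy)
    by_cases hc : x.2 = c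
    · have hf1 : (x :: t).filter (fun x => x.2 = c) = x :: t.filter (fun x => x.2 = c) := by
        simp [List.filter_cons, hc]
      have hf2 : (x :: t).filter (fun x => ¬ x.2 = c) = t.filter (fun x => ¬ x.2 = c) := by
        simp [List.filter_cons, hc]
      obtain ⟨ih1, ih2, ih3, ih4⟩ := ih _ h2 hvt
      rw [hf1, hf2]
      refine ⟨⟨by rw [← hc]; exact h1, ?_⟩, ?_, ?_, ih4⟩
      · have : (if c ≤ x.2 then f c + 1 else f c) = f c + 1 := by simp [hc]
        rw [this] at ih1
        exact ih1
      · apply loInv_mono _ _ _ _ ih2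
        intro y hy
        have hyt : y ∈ t.filter (fun x => ¬ x.2 = c) := hy
        have hymem := List.mem_of_mem_filter hyt
        have hyne : ¬ y.2 = c := by
          have := List.of_mem_filter hyt
          simpa using this
        have hylt : y.2 < c := by have := hvt y hymem; omega
        have : (if y.2 ≤ x.2 then f y.2 + 1 else f y.2) = f y.2 + 1 := by
          rw [if_pos]; omega
        rw [this]
        simp [List.length_cons]
        omega
      · show TS (x :: t) = TS (x :: t.filter (fun x => x.2 = c)) + _
        show T x.1 x.2 + TS t = (T x.1 x.2 + TS (t.filter (fun x => x.2 = c))) + _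
        rw [ih3]; ring
    · have hf1 : (x :: t).filter (fun x => x.2 = c) = t.filter (fun x => x.2 = c) := by
        simp [List.filter_cons, hc]
      have hf2 : (x :: t).filter (fun x => ¬ x.2 = c) = x :: t.filter (fun x => ¬ x.2 = c) := by
        simp [List.filter_cons, hc]
      obtain ⟨ih1, ih2, ih3, ih4⟩ := ih _ h2 hvt
      rw [hf1, hf2]
      have hxlt : x.2 < c := by have := hv x (List.mem_cons_self); omega
      refine ⟨?_, ⟨by simpa using le_trans h1 (Nat.le_add_right _ _), ?_⟩, ?_, ?_⟩
      · have : (if c ≤ x.2 then f c + 1 else f c) = f c := by rw [if_neg]; omega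
        rw [this] at ih1
        exact ih1
      · apply loInv_mono _ _ _ _ ih2
        intro y _
        by_cases hyc : y.2 ≤ x.2 <;> simp [hyc] <;> omega
      · show T x.1 x.2 + TS t = _ + (T x.1 x.2 + TS (t.filter (fun x => ¬ x.2 = c)))
        rw [ih3]; ring
      · intro y hy
        rcases List.mem_cons.mp hy with rfl | hy
        · exact hxlt
        · exact ih4 y hy

lemma many_cons (c : ℕ) (x : ℕ × ℕ) (t lo : List (ℕ × ℕ)) (a : List ℕ)
    (iht : ∀ (lo : List (ℕ × ℕ)) (a : List ℕ), a.Pairwise (· ≥ ·) →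
      (∀ y ∈ t, y.2 = c) → (∀ y ∈ lo, y.2 < c) →
      hiInv t (cg a c) → loInv lo (fun w => cg a w + t.length) →
      ∃ a', a'.Pairwise (· ≥ ·) ∧ S a' 0 = S a 0 + TS t + TS lo)
    (hsa : a.Pairwise (· ≥ ·)) (hhv : ∀ y ∈ x :: t, y.2 = c) (hlv : ∀ y ∈ lo, y.2 < c)
    (hhi : hiInv (x :: t) (cg a c)) (hlo : loInv lo (fun w => cg a w + (x :: t).length)) :
    ∃ a', a'.Pairwise (· ≥ ·) ∧ S a' 0 = S a 0 + TS (x :: t) + TS lo := by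
  have hxc : x.2 = c := hhv x (List.mem_cons_self)
  obtain ⟨hx1, hhi'⟩ := hhi
  obtain ⟨a₁, L, h1, h2, h4, h5, h6⟩ := step a hsa x.1 c hx1
  have hLv : ∀ y ∈ L, y.2 < c := fun y hy => by have := h4 y hy; omega
  obtain ⟨a₂, g1, g2⟩ := iht (L ++ lo) a₁ h1
    (fun y hy => hhv y (List.mem_cons_of_mem _ hy))
    (fun y hy => by
      rcases List.mem_append.mp hy with hy | hy
      · exact hLv y hy
      · exact hlv y hy)
    (hiInv_mono t (cg a c + 1) (cg a₁ c) (h2 c le_rfl) hhi')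
    (by
      apply loInv_append
      · intro y hy
        exact le_trans (h5 y hy) (Nat.le_add_right _ _)
      · apply loInv_mono _ _ _ _ hlo
        intro y hy
        have hylt := hlv y hy
        have := h2 y.2 (by omega)
        simp only [List.length_cons]
        omega)
  refine ⟨a₂, g1, ?_⟩
  rw [g2, TS_append, h6]
  show _ = S a 0 + (T x.1 x.2 + TS t) + TS lo
  rw [hxc]
  ring

lemma many : ∀ (c : ℕ) (hi lo : List (ℕ × ℕ)) (a : List ℕ), a.Pairwise (· ≥ ·) →
    (∀ x ∈ hi, x.2 = c) → (∀ x ∈ lo, x.2 < c) →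
    hiInv hi (cg a c) → loInv lo (fun w => cg a w + hi.length) →
    ∃ a', a'.Pairwise (· ≥ ·) ∧ S a' 0 = S a 0 + TS hi + TS lo := by
  intro c
  induction c with
  | zero =>
    intro hi
    induction hi with
    | nil =>
      intro lo a hsa _ hlv _ _
      have hlo : lo = [] := by
        cases lo with
        | nil => rfl
        | cons y s => exact absurd (hlv y (List.mem_cons_self)) (by omega)
      subst hlo
      exact ⟨a, hsa, by simp [TS]⟩
    | cons x t iht =>
      intro lo a hsa hhv hlv hhi hlo
      exact many_cons 0 x t lo a
        (fun lo a h1 h2 h3 h4 h5 => iht lo a h1 h2 h3 h4 h5) hsa hhv hlv hhi hlo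
  | succ c ihc =>
    intro hi
    induction hi with
    | nil =>
      intro lo a hsa _ hlv _ hlo
      simp only [List.length_nil, Nat.add_zero] at hlo
      obtain ⟨s1, s2, s3, s4⟩ := split c lo (fun w => cg a w) hlo hlv
      obtain ⟨a', g1, g2⟩ := ihc (lo.filter (fun x => x.2 = c))
        (lo.filter (fun x => ¬ x.2 = c)) a hsa
        (fun y hy => by simpa using List.of_mem_filter hy)
        s4 s1 s2
      refine ⟨a', g1, ?_⟩
      rw [g2, s3]
      simp [TS]
      ring
    | cons x t iht =>
      intro lo a hsa hhv hlv hhi hlo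
      exact many_cons (c+1) x t lo a
        (fun lo a h1 h2 h3 h4 h5 => iht lo a h1 h2 h3 h4 h5) hsa hhv hlv hhi hlo

-- conversion and setup
lemma S_eq_sum : ∀ (a : List ℕ) (n : ℕ),
    S a n = ∑ i ∈ Finset.range a.length, T (n + i) (a.getD i 0) := by
  intro a
  induction a with
  | nil => intro n; simp [S]
  | cons v t ih =>
    intro n
    show T n v + S t (n+1) = _
    rw [ih (n+1), List.length_cons, Finset.sum_range_succ']
    simp only [List.getD_cons_succ, List.getD_cons_zero, Nat.add_zero]
    rw [add_comm]
    congr 1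
    · refine Finset.sum_congr rfl fun i _ => ?_
      have : n + 1 + i = n + (i + 1) := by omega
      rw [this]

def pend : List ℕ → ℕ → List (ℕ × ℕ)
  | [], _ => []
  | v :: t, n => (n, v) :: pend t (n+1)

lemma TS_pend : ∀ (b : List ℕ) (n : ℕ), TS (pend b n) = S b n := by
  intro b
  induction b with
  | nil => intro n; rfl
  | cons v t ih => intro n; show T n v + TS (pend t (n+1)) = T n v + S t (n+1); rw [ih]

lemma pend_val : ∀ (b : List ℕ) (n : ℕ) (x : ℕ × ℕ), x ∈ pend b n → x.2 ∈ b := by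
  intro b
  induction b with
  | nil => intro n x hx; simp [pend] at hx
  | cons v t ih =>
    intro n x hx
    rcases List.mem_cons.mp hx with rfl | hx
    · exact List.mem_cons_self
    · exact List.mem_cons_of_mem _ (ih (n+1) x hx)

lemma pend_inv : ∀ (b : List ℕ) (f : ℕ → ℕ) (n : ℕ), b.Pairwise (· ≥ ·) →
    (∀ e ∈ b, n ≤ f e) → loInv (pend b n) f := by
  intro b
  induction b with
  | nil => intro f n _ _; trivial
  | cons v t ih =>
    intro f n hs h
    rw [List.pairwise_cons] at hs
    refine ⟨h v (List.mem_cons_self), ?_⟩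
    apply ih _ _ hs.2
    intro e he
    have h1 : e ≤ v := hs.1 e he
    have h2 : n ≤ f e := h e (List.mem_cons_of_mem _ he)
    simp [h1]
    omega

lemma sorted_le_head (b : List ℕ) (hs : b.Pairwise (· ≥ ·)) (e : ℕ) (he : e ∈ b) :
    e ≤ b.headD 0 := by
  cases b with
  | nil => simp at he
  | cons u t =>
    rw [List.pairwise_cons] at hs
    rcases List.mem_cons.mp he with rfl | he
    · simp
    · simpa using hs.1 e he

lemma rep_iff (P : Polynomial ℚ) (a : List ℕ) :
    IsGotzmannRep P a ↔ a.Pairwise (· ≥ ·) ∧ P = S a 0 := by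
  unfold IsGotzmannRep
  rw [S_eq_sum]
  simp [T]

/-- If `P` and `Q` each admit a Gotzmann representation, then so does `P + Q`. -/
theorem hasGotzmannRep_add (P Q : Polynomial ℚ)
    (hP : HasGotzmannRep P) (hQ : HasGotzmannRep Q) :
    HasGotzmannRep (P + Q) := by
  obtain ⟨a, hPa⟩ := hP
  obtain ⟨b, hQb⟩ := hQ
  rw [rep_iff] at hPa hQb
  obtain ⟨hsa, hPs⟩ := hPa
  obtain ⟨hsb, hQs⟩ := hQb
  set c := b.headD 0 + 1 with hc
  obtain ⟨a', g1, g2⟩ := many c [] (pend b 0) a hsa (by simp)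
    (fun x hx => by
      have := sorted_le_head b hsb x.2 (pend_val b 0 x hx)
      omega)
    trivial
    (pend_inv b _ 0 hsb (fun e _ => Nat.zero_le _))
  refine ⟨a', (rep_iff _ _).mpr ⟨g1, ?_⟩⟩
  rw [g2, TS_pend, ← hPs, ← hQs]
  show P + Q = P + 0 + Q
  rw [add_zero]
end

section
/- Let a_1 ≥ a_2 ≥ ⋯ ≥ a_t ≥ 0 be integers with t ≥ 1, and let d be an integer with d ≥ t. Set N = ∑_{i=1}^t C(d + a_i − (i−1), d − (i−1)). Then the d-th Macaulay transform of N is N^{⟨d⟩} = ∑_{i=1}^t C(d + 1 + a_i − (i−1), d + 1 − (i−1)). -/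
/-- The `d`-th Macaulay transform `a^{⟨d⟩}`: writing the (unique, greedy) `d`-th Macaulay
representation `a = C(k_d, d) + C(k_{d-1}, d-1) + ⋯ + C(k_δ, δ)` with
`k_d > k_{d-1} > ⋯ > k_δ ≥ δ ≥ 1`, it is `C(k_d+1, d+1) + ⋯ + C(k_δ+1, δ+1)`;
by convention `0^{⟨d⟩} = 0`. -/
def macaulayTransform : ℕ → ℕ → ℕ
  | 0, _ => 0
  | _ + 1, 0 => 0
  | d + 1, a + 1 =>
    Nat.choose (Nat.findGreatest (fun k => Nat.choose k (d + 1) ≤ a + 1) (a + d + 2) + 1) (d + 2)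
      + macaulayTransform d
          (a + 1 - Nat.choose (Nat.findGreatest (fun k => Nat.choose k (d + 1) ≤ a + 1) (a + d + 2)) (d + 1))

lemma macaulayTransform_zero (d : ℕ) : macaulayTransform d 0 = 0 := by
  cases d <;> rfl

/-- Lower bound on binomial coefficients: `k - d + 1 ≤ C(k, d)` for `1 ≤ d ≤ k`. -/
lemma choose_lower_bound : ∀ d k : ℕ, 1 ≤ d → d ≤ k → k - d + 1 ≤ Nat.choose k d := by
  intro d
  induction d with
  | zero => omega
  | succ d ih =>
    intro k _ hk
    cases d with
    | zero => simp [Nat.choose_one_right]; omega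
    | succ d' =>
      obtain ⟨k', rfl⟩ : ∃ k', k = k' + 1 := ⟨k - 1, by omega⟩
      have h1 := ih k' (by omega) (by omega)
      have h2 : Nat.choose k' (d' + 1) ≤ Nat.choose (k' + 1) (d' + 1 + 1) := by
        rw [Nat.choose_succ_succ]
        omega
      omega

/-- Unfolding lemma for one greedy step of the Macaulay transform. -/
lemma macaulayTransform_step (d N k : ℕ) (hd : 1 ≤ d) (hk : d ≤ k)
    (h1 : Nat.choose k d ≤ N) (h2 : N < Nat.choose (k + 1) d) :
    macaulayTransform d N =
      Nat.choose (k + 1) (d + 1) + macaulayTransform (d - 1) (N - Nat.choose k d) := by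
  obtain ⟨d', rfl⟩ : ∃ d', d = d' + 1 := ⟨d - 1, by omega⟩
  have hpos : 0 < Nat.choose k (d' + 1) := Nat.choose_pos hk
  obtain ⟨a, rfl⟩ : ∃ a, N = a + 1 := ⟨N - 1, by omega⟩
  have hbound : k ≤ a + d' + 2 := by
    have := choose_lower_bound (d' + 1) k hd hk
    omega
  have hKeq : Nat.findGreatest (fun m => Nat.choose m (d' + 1) ≤ a + 1) (a + d' + 2) = k := by
    rw [Nat.findGreatest_eq_iff]
    refine ⟨hbound, fun _ => h1, fun n hn _ hPn => ?_⟩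
    have : Nat.choose (k + 1) (d' + 1) ≤ Nat.choose n (d' + 1) :=
      Nat.choose_le_choose _ hn
    omega
  show macaulayTransform (d' + 1) (a + 1) = _
  rw [macaulayTransform, hKeq]
  simp

/-- Hockey stick: `∑_{j=0}^{n} C(c+j, j) = C(c+n+1, n)`. -/
lemma hockey_stick (c : ℕ) : ∀ n : ℕ,
    ∑ j ∈ Finset.range (n + 1), Nat.choose (c + j) j = Nat.choose (c + n + 1) n := by
  intro n
  induction n with
  | zero => simp
  | succ n ih =>
    rw [Finset.sum_range_succ, ih]
    have : Nat.choose (c + n + 1 + 1) (n + 1) =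
        Nat.choose (c + n + 1) n + Nat.choose (c + n + 1) (n + 1) :=
      Nat.choose_succ_succ _ _
    have he : c + (n + 1) = c + n + 1 := by omega
    rw [he]
    omega

theorem macaulayTransform_of_gotzmann_sum_aux : ∀ t : ℕ, ∀ d : ℕ, ∀ a : ℕ → ℕ,
    1 ≤ t → t ≤ d → (∀ ⦃i j⦄, i ≤ j → j < t → a j ≤ a i) →
    macaulayTransform d (∑ i ∈ Finset.range t, Nat.choose (d + a i - i) (d - i)) =
      ∑ i ∈ Finset.range t, Nat.choose (d + 1 + a i - i) (d + 1 - i) := by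
  intro t
  induction t with
  | zero => omega
  | succ t ih =>
    intro d a _ htd hanti
    set N := ∑ i ∈ Finset.range (t + 1), Nat.choose (d + a i - i) (d - i) with hN
    set c := a 0 with hc
    have hsplit : N = (∑ i ∈ Finset.range t, Nat.choose (d + a (i + 1) - (i + 1)) (d - (i + 1)))
        + Nat.choose (d + c) d := by
      rw [hN, Finset.sum_range_succ']
      simp [hc]
    have h1 : Nat.choose (d + c) d ≤ N := by omega
    have h2 : N < Nat.choose (d + c + 1) d := by
      have hle : N ≤ ∑ i ∈ Finset.range (t + 1), Nat.choose (d + c - i) (d - i) := by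
        apply Finset.sum_le_sum
        intro i hi
        apply Nat.choose_le_choose
        have : a i ≤ c := hanti (Nat.zero_le i) (Finset.mem_range.mp hi)
        omega
      have hlt : ∑ i ∈ Finset.range (t + 1), Nat.choose (d + c - i) (d - i)
          < ∑ i ∈ Finset.range (d + 1), Nat.choose (d + c - i) (d - i) := by
        apply Finset.sum_lt_sum_of_subset
          (Finset.range_subset_range.mpr (by omega)) (i := d)
        · exact Finset.mem_range.mpr (by omega)
        · exact fun h => by have := Finset.mem_range.mp h; omega
        · exact Nat.choose_pos (by omega)
        · intro j _ _; exact Nat.zero_le _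
      have heq : ∑ i ∈ Finset.range (d + 1), Nat.choose (d + c - i) (d - i)
          = Nat.choose (d + c + 1) d := by
        rw [← Finset.sum_range_reflect]
        have : ∀ j ∈ Finset.range (d + 1),
            Nat.choose (d + c - (d + 1 - 1 - j)) (d - (d + 1 - 1 - j)) = Nat.choose (c + j) j := by
          intro j hj
          have hj' := Finset.mem_range.mp hj
          congr 1 <;> omega
        rw [Finset.sum_congr rfl this, hockey_stick]
        congr 1
        omega
      omega
    have hstep := macaulayTransform_step d N (d + c) (by omega) (by omega) h1 h2
    rw [hstep]
    have hsub : N - Nat.choose (d + c) d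
        = ∑ i ∈ Finset.range t, Nat.choose (d + a (i + 1) - (i + 1)) (d - (i + 1)) := by
      omega
    rw [hsub]
    rw [Finset.sum_range_succ']
    have hr0 : Nat.choose (d + 1 + a 0 - 0) (d + 1 - 0) = Nat.choose (d + c + 1) (d + 1) := by
      congr 1 <;> omega
    rw [hr0]
    rcases Nat.eq_zero_or_pos t with rfl | htpos
    · simp [macaulayTransform_zero]
    · obtain ⟨e, rfl⟩ : ∃ e, d = e + 1 := ⟨d - 1, by omega⟩
      have hre : ∀ i ∈ Finset.range t,
          Nat.choose (e + 1 + a (i + 1) - (i + 1)) (e + 1 - (i + 1))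
            = Nat.choose (e + a (i + 1) - i) (e - i) := by
        intro i hi
        congr 1 <;> omega
      rw [Finset.sum_congr rfl hre]
      have := ih e (fun i => a (i + 1)) htpos (by omega)
        (fun i j hij hjt => hanti (by omega) (by omega))
      simp only [Nat.add_sub_cancel]
      rw [this]
      beta_reduce
      rw [Nat.add_comm]
      congr 1
      apply Finset.sum_congr rfl
      intro i hi
      have := Finset.mem_range.mp hi
      congr 1 <;> omega

/-- For integers `a_1 ≥ ⋯ ≥ a_t ≥ 0` (here 0-indexed `a 0, …, a (t-1)`),
`t ≥ 1` and `d ≥ t`, the `d`-th Macaulay transform of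
`N = ∑_{i=1}^t C(d + a_i - (i-1), d - (i-1))` is
`N^{⟨d⟩} = ∑_{i=1}^t C(d + 1 + a_i - (i-1), d + 1 - (i-1))`. -/
theorem macaulayTransform_of_gotzmann_sum (t d : ℕ) (ht : 1 ≤ t) (htd : t ≤ d)
    (a : ℕ → ℕ) (hanti : ∀ ⦃i j⦄, i ≤ j → j < t → a j ≤ a i) :
    macaulayTransform d (∑ i ∈ Finset.range t, Nat.choose (d + a i - i) (d - i)) =
      ∑ i ∈ Finset.range t, Nat.choose (d + 1 + a i - i) (d + 1 - i) := by
  exact macaulayTransform_of_gotzmann_sum_aux t d a ht htd hanti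
end

section
/- Let a_1 ≥ a_2 ≥ ⋯ ≥ a_s ≥ 0 be integers with s ≥ 2, and let P(d) = ∑_{i=1}^s C(d + a_i − (i−1), a_i). Suppose H : ℕ → ℕ satisfies H(d+1) ≤ H(d)^{⟨d⟩} for all d ≥ s − 1. If H(s−1) < P(s−1), then H(d) < P(d) for all d ≥ s − 1. -/
namespace MacAux

lemma choose_lower (k d : ℕ) : k - d ≤ Nat.choose k (d+1) := by
  induction k with
  | zero => simp
  | succ k ih =>
    rcases le_or_gt (k+1) d with h | h
    · have : k + 1 - d = 0 := Nat.sub_eq_zero_of_le h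
      simp [this]
    · have hd : d ≤ k := Nat.lt_succ_iff.mp h
      have h1 : 1 ≤ Nat.choose k d := Nat.choose_pos hd
      have := Nat.choose_succ_succ' k d
      omega

lemma hockey (n t : ℕ) : ∑ v ∈ Finset.range (t+1), Nat.choose (n+v) n = Nat.choose (n+t+1) (n+1) := by
  induction t with
  | zero => simp
  | succ t ih =>
    rw [Finset.sum_range_succ, ih, show n+(t+1) = n+t+1 from rfl]
    have := Nat.choose_succ_succ' (n+t+1) n
    omega

lemma MT_zero_left (a : ℕ) : macaulayTransform 0 a = 0 := rfl

lemma MT_zero_right (d : ℕ) : macaulayTransform d 0 = 0 := by cases d <;> rfl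

def F (d a : ℕ) : ℕ := Nat.findGreatest (fun k => Nat.choose k (d+1) ≤ a+1) (a+d+2)

lemma MT_succ (d a : ℕ) : macaulayTransform (d+1) (a+1) =
    Nat.choose (F d a + 1) (d+2) + macaulayTransform d (a + 1 - Nat.choose (F d a) (d+1)) := rfl

lemma F_ge (d a : ℕ) : d+1 ≤ F d a :=
  Nat.le_findGreatest (by omega) (by simp)

lemma F_spec (d a : ℕ) : Nat.choose (F d a) (d+1) ≤ a+1 :=
  Nat.findGreatest_spec (P := fun k => Nat.choose k (d+1) ≤ a+1) (m := d+1) (by omega) (by simp)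

lemma F_le (d a : ℕ) : F d a ≤ a+d+1 := by
  have h1 := F_spec d a
  have h2 := choose_lower (F d a) d
  omega

lemma F_max (d a : ℕ) : a+1 < Nat.choose (F d a + 1) (d+1) := by
  have := Nat.findGreatest_is_greatest (P := fun k => Nat.choose k (d+1) ≤ a+1)
    (n := a+d+2) (k := F d a + 1) (Nat.lt_succ_self _) (by have := F_le d a; unfold F at this ⊢; omega)
  omega


lemma F_eq (d k r : ℕ) (hk : d+1 ≤ k) (hr : r < Nat.choose k d) :
    F d (Nat.choose k (d+1) + r - 1) = k := by
  have hck : 1 ≤ Nat.choose k (d+1) := Nat.choose_pos hk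
  have hlow : k - d ≤ Nat.choose k (d+1) := choose_lower k d
  set a := Nat.choose k (d+1) + r - 1 with ha
  have hav : a + 1 = Nat.choose k (d+1) + r := by omega
  have hbound : k ≤ a + d + 2 := by omega
  have h1 : k ≤ F d a := Nat.le_findGreatest hbound (show Nat.choose k (d+1) ≤ a + 1 by omega)
  rcases Nat.lt_or_ge k (F d a) with h2 | h2
  · exfalso
    have hs := F_spec d a
    have hmono : Nat.choose (k+1) (d+1) ≤ Nat.choose (F d a) (d+1) := Nat.choose_le_choose _ h2
    have hp : Nat.choose (k+1) (d+1) = Nat.choose k d + Nat.choose k (d+1) := Nat.choose_succ_succ' k d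
    omega
  · omega

lemma EXACT (d k r : ℕ) (hk : d+1 ≤ k) (hr : r < Nat.choose k d) :
    macaulayTransform (d+1) (Nat.choose k (d+1) + r)
      = Nat.choose (k+1) (d+2) + macaulayTransform d r := by
  have hck : 1 ≤ Nat.choose k (d+1) := Nat.choose_pos hk
  have hav : Nat.choose k (d+1) + r = (Nat.choose k (d+1) + r - 1) + 1 := by omega
  rw [hav, MT_succ, F_eq d k r hk hr]
  congr 2
  omega

lemma U : ∀ d a K : ℕ, a < Nat.choose K d →
    macaulayTransform d a < Nat.choose (K+1) (d+1) := by
  intro d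
  induction d with
  | zero =>
    intro a K h
    rw [MT_zero_left]
    exact Nat.choose_pos (by omega)
  | succ d ih =>
    intro a K h
    have hKpos : d + 1 ≤ K := by
      by_contra hc
      rw [Nat.choose_eq_zero_of_lt (by omega)] at h
      omega
    match a with
    | 0 =>
      rw [MT_zero_right]
      exact Nat.choose_pos (by omega)
    | a + 1 =>
      show macaulayTransform (d+1) (a+1) < Nat.choose (K+1) (d+2)
      rw [MT_succ]
      have hs := F_spec d a
      have hg := F_ge d a
      have hm := F_max d a
      have hp : Nat.choose (F d a + 1) (d+1) = Nat.choose (F d a) d + Nat.choose (F d a) (d+1) :=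
        Nat.choose_succ_succ' (F d a) d
      have hr : a + 1 - Nat.choose (F d a) (d+1) < Nat.choose (F d a) d := by omega
      have h1 : macaulayTransform d (a + 1 - Nat.choose (F d a) (d+1))
          < Nat.choose (F d a + 1) (d+1) := ih _ _ hr
      have hFK : F d a < K := by
        by_contra hc
        have : Nat.choose K (d+1) ≤ Nat.choose (F d a) (d+1) := Nat.choose_le_choose _ (by omega)
        omega
      have hp2 : Nat.choose (F d a + 2) (d+2)
          = Nat.choose (F d a + 1) (d+1) + Nat.choose (F d a + 1) (d+2) :=
        Nat.choose_succ_succ' (F d a + 1) (d+1)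
      have hle : Nat.choose (F d a + 2) (d+2) ≤ Nat.choose (K+1) (d+2) :=
        Nat.choose_le_choose _ (by omega)
      omega

lemma MONO : ∀ d a b : ℕ, a ≤ b → macaulayTransform d a ≤ macaulayTransform d b := by
  intro d
  induction d with
  | zero => intro a b _; simp [MT_zero_left]
  | succ d ih =>
    intro a b hab
    match a, hab with
    | 0, _ => rw [MT_zero_right]; exact Nat.zero_le _
    | a + 1, hab =>
      match b, hab with
      | b + 1, hab =>
        have hFab : F d a ≤ F d b := by
          refine Nat.le_findGreatest ?_ ?_
          · have := F_le d a; omega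
          · show Nat.choose (F d a) (d+1) ≤ b + 1
            have := F_spec d a; omega
        rcases eq_or_lt_of_le hFab with he | hlt
        · rw [MT_succ, MT_succ, ← he]
          have hmt : macaulayTransform d (a + 1 - Nat.choose (F d a) (d+1))
              ≤ macaulayTransform d (b + 1 - Nat.choose (F d a) (d+1)) := ih _ _ (by omega)
          omega
        · have h1 : macaulayTransform (d+1) (a+1) < Nat.choose (F d a + 2) (d+2) := by
            have := F_max d a
            exact U (d+1) (a+1) (F d a + 1) this
          have h2 : Nat.choose (F d b + 1) (d+2) ≤ macaulayTransform (d+1) (b+1) := by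
            rw [MT_succ]; exact Nat.le_add_right _ _
          have h3 : Nat.choose (F d a + 2) (d+2) ≤ Nat.choose (F d b + 1) (d+2) :=
            Nat.choose_le_choose _ (by omega)
          omega

lemma G (j c : ℕ) : macaulayTransform j (Nat.choose (c+j) j - 1) + (c+1)
    = Nat.choose (c+j+1) (j+1) := by
  induction j with
  | zero => simp [MT_zero_left]
  | succ j ih =>
    rcases Nat.eq_zero_or_pos c with hc | hc
    · subst hc
      simp [MT_zero_right]
    · have hp : Nat.choose (c+(j+1)) (j+1)
          = Nat.choose (c+j) j + Nat.choose (c+j) (j+1) := by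
        rw [show c+(j+1) = (c+j)+1 by ring]
        exact Nat.choose_succ_succ' (c+j) j
      have hpos : 1 ≤ Nat.choose (c+j) j := Nat.choose_pos (by omega)
      have hval : Nat.choose (c+(j+1)) (j+1) - 1
          = Nat.choose (c+j) (j+1) + (Nat.choose (c+j) j - 1) := by omega
      rw [hval, EXACT j (c+j) _ (by omega) (by omega)]
      have hp2 : Nat.choose (c+j+2) (j+2)
          = Nat.choose (c+j+1) (j+1) + Nat.choose (c+j+1) (j+2) :=
        Nat.choose_succ_succ' (c+j+1) (j+1)
      have : c+(j+1)+1 = c+j+2 := by ring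
      rw [this]
      have hat1 : Nat.choose (c+j+2) (j+1+1) = Nat.choose (c+j+2) (j+2) := rfl
      omega

lemma flip (m n : ℕ) : Nat.choose (m+n) m = Nat.choose (m+n) n := by
  have := Nat.choose_symm (show n ≤ m + n by omega)
  rwa [Nat.add_sub_cancel] at this

lemma hockey2 (n j t : ℕ) :
    ∑ v ∈ Finset.range (t+1), Nat.choose (n+j+v) n ≤ Nat.choose (n+j+t+1) (n+1) := by
  induction t with
  | zero =>
    simp only [Nat.zero_add, Finset.sum_range_one, Nat.add_zero]
    have := Nat.choose_succ_succ' (n+j) n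
    omega
  | succ t ih =>
    rw [Finset.sum_range_succ]
    have hp := Nat.choose_succ_succ' (n+j+t+1) n
    have h1 : n+j+(t+1) = n+j+t+1 := by ring
    rw [h1]
    omega

lemma K' : ∀ (t j c : ℕ) (b : ℕ → ℕ), Monotone b → c ≤ b 0 →
    macaulayTransform (j + t)
      ((∑ u ∈ Finset.range t, Nat.choose (j+1+u + b u) (j+1+u)) + Nat.choose (c+j) j - 1)
      + (c+1)
    = (∑ u ∈ Finset.range t, Nat.choose (j+2+u + b u) (j+2+u)) + Nat.choose (c+j+1) (j+1) := by
  intro t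
  induction t with
  | zero => intro j c b _ _; simpa using G j c
  | succ t ih =>
    intro j c b hb hc
    rw [Finset.sum_range_succ, Finset.sum_range_succ]
    set k := j+1+t + b t with hk
    set S := ∑ u ∈ Finset.range t, Nat.choose (j+1+u + b u) (j+1+u) with hS
    have hcp : 1 ≤ Nat.choose (c+j) j := Nat.choose_pos (by omega)
    have hval : S + Nat.choose k (j+1+t) + Nat.choose (c+j) j - 1
        = Nat.choose k (j+t+1) + (S + Nat.choose (c+j) j - 1) := by
      have he : Nat.choose k (j+1+t) = Nat.choose k (j+t+1) := by
        rw [show j+1+t = j+t+1 by ring]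
      omega
    -- remainder bound
    have hterm : ∀ u ∈ Finset.range t,
        Nat.choose (j+1+u + b u) (j+1+u) ≤ Nat.choose (b t + j + (u+1)) (b t) := by
      intro u hu
      have hbu : b u ≤ b t := hb (Nat.le_of_lt (Finset.mem_range.mp hu))
      have h1 : Nat.choose (j+1+u + b u) (j+1+u) ≤ Nat.choose (j+1+u + b t) (j+1+u) :=
        Nat.choose_le_choose _ (by omega)
      have h2 : Nat.choose (j+1+u + b t) (j+1+u) = Nat.choose (b t + j + (u+1)) (b t) := by
        rw [flip (j+1+u) (b t), show b t + j + (u+1) = j+1+u + b t by ring]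
      omega
    have hsum : S ≤ ∑ u ∈ Finset.range t, Nat.choose (b t + j + (u+1)) (b t) :=
      Finset.sum_le_sum hterm
    have hc2 : Nat.choose (c+j) j ≤ Nat.choose (b t + j) (b t) := by
      have h3 : c ≤ b t := le_trans hc (hb (Nat.zero_le t))
      have h2 : Nat.choose (c+j) j ≤ Nat.choose (b t + j) j :=
        Nat.choose_le_choose _ (by omega)
      rw [flip (b t) j]
      exact h2
    have hrb : S + Nat.choose (c+j) j ≤ Nat.choose k (j+t) := by
      have hsplit : ∑ v ∈ Finset.range (t+1), Nat.choose (b t + j + v) (b t)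
          = ∑ u ∈ Finset.range t, Nat.choose (b t + j + (u+1)) (b t)
            + Nat.choose (b t + j) (b t) := by
        rw [Finset.sum_range_succ']
        simp
      have hh := hockey2 (b t) j t
      have hkk : Nat.choose (b t + j + t + 1) (b t + 1) = Nat.choose k (j+t) := by
        rw [show b t + j + t + 1 = (b t + 1) + (j + t) by ring, flip (b t + 1) (j+t),
          show (b t + 1) + (j + t) = k by omega]
      omega
    have hEX := EXACT (j+t) k (S + Nat.choose (c+j) j - 1) (by omega)
        (by have : 1 ≤ Nat.choose k (j+t) := Nat.choose_pos (by omega); omega)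
    rw [show j + (t+1) = (j+t)+1 by ring, hval, hEX]
    have hih := ih j c b hb hc
    rw [← hS] at hih
    have htop : Nat.choose (k+1) (j+t+2) = Nat.choose (j+2+t + b t) (j+2+t) := by
      rw [show k+1 = j+2+t + b t by omega, show j+t+2 = j+2+t by ring]
    omega

lemma CONV (s : ℕ) (hs : 2 ≤ s) (a : ℕ → ℕ) (e : ℕ) (he : s - 1 ≤ e) :
    ∑ i ∈ Finset.range s, Nat.choose (e + a i - i) (a i)
    = (∑ u ∈ Finset.range (s-1),
        Nat.choose ((e-(s-1))+1+u + a (s-2-u)) ((e-(s-1))+1+u))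
      + Nat.choose (a (s-1) + (e-(s-1))) (e-(s-1)) := by
  obtain ⟨t, rfl⟩ : ∃ t, s = t + 1 := ⟨s-1, by omega⟩
  simp only [Nat.add_sub_cancel]
  rw [Finset.sum_range_succ]
  congr 1
  · rw [← Finset.sum_range_reflect (fun i => Nat.choose (e + a i - i) (a i)) t]
    apply Finset.sum_congr rfl
    intro u hu
    have hu' : u < t := Finset.mem_range.mp hu
    have ht : t + 1 - 2 = t - 1 := by omega
    rw [ht]
    have htop : e + a (t-1-u) - (t-1-u) = (e-t)+1+u + a (t-1-u) := by omega
    rw [htop, flip ((e-t)+1+u) (a (t-1-u))]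
  · have htop : e + a t - t = a t + (e-t) := by omega
    rw [htop, flip (a t) (e-t)]

lemma Pstep (s : ℕ) (hs : 2 ≤ s) (a : ℕ → ℕ)
    (hanti : ∀ ⦃i j⦄, i ≤ j → j < s → a j ≤ a i) (d : ℕ) (hd : s - 1 ≤ d) :
    macaulayTransform d ((∑ i ∈ Finset.range s, Nat.choose (d + a i - i) (a i)) - 1)
      + (a (s-1) + 1)
    = ∑ i ∈ Finset.range s, Nat.choose (d + 1 + a i - i) (a i) := by
  have hbmono : Monotone (fun u => a (s-2-u)) := by
    intro u v huv
    exact hanti (by omega) (by omega)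
  have hcb : a (s-1) ≤ a (s-2-0) := hanti (by omega) (by omega)
  obtain ⟨j, rfl⟩ : ∃ j, d = j + (s-1) := ⟨d-(s-1), by omega⟩
  have h1 := CONV s hs a (j+(s-1)) (by omega)
  have h2 := CONV s hs a (j+(s-1)+1) (by omega)
  simp only [Nat.add_sub_cancel] at h1
  have he2 : j+(s-1)+1-(s-1) = j+1 := by omega
  rw [he2] at h2
  rw [h1, h2]
  have hK := K' (s-1) j (a (s-1)) (fun u => a (s-2-u)) hbmono hcb
  ring_nf at hK ⊢
  convert hK using 3 <;> ring_nf

end MacAux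

/-- Let `a_1 ≥ ⋯ ≥ a_s ≥ 0` (0-indexed here), `s ≥ 2`, and
`P(d) = ∑_{i=1}^s C(d + a_i - (i-1), a_i)`. If `H : ℕ → ℕ` satisfies
`H(d+1) ≤ H(d)^{⟨d⟩}` for all `d ≥ s - 1` and `H(s-1) < P(s-1)`, then `H(d) < P(d)`
for all `d ≥ s - 1`. -/
theorem lt_of_macaulay_bound_persists (s : ℕ) (hs : 2 ≤ s) (a : ℕ → ℕ)
    (hanti : ∀ ⦃i j⦄, i ≤ j → j < s → a j ≤ a i) (H : ℕ → ℕ)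
    (hH : ∀ d : ℕ, s - 1 ≤ d → H (d + 1) ≤ macaulayTransform d (H d))
    (hlt : H (s - 1) < ∑ i ∈ Finset.range s, Nat.choose (s - 1 + a i - i) (a i)) :
    ∀ d : ℕ, s - 1 ≤ d → H d < ∑ i ∈ Finset.range s, Nat.choose (d + a i - i) (a i) := by

  intro d hd
  induction d, hd using Nat.le_induction with
  | base => exact hlt
  | succ d hd ih =>
    have h1 : H (d+1) ≤ macaulayTransform d (H d) := hH d hd
    have h2 : macaulayTransform d (H d)
        ≤ macaulayTransform d ((∑ i ∈ Finset.range s, Nat.choose (d + a i - i) (a i)) - 1) :=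
      MacAux.MONO d _ _ (by omega)
    have h3 := MacAux.Pstep s hs a hanti d hd
    omega
end

section
/- If a polynomial P ∈ ℚ[d] of degree 3 with leading coefficient 1/3 admits a Gotzmann representation with exponents a_1 ≥ a_2 ≥ ⋯ ≥ a_s ≥ 0, then s ≥ 2, a_1 = a_2 = 3, and a_i ≤ 2 for all i ≥ 3; that is, the degree-3 part of the representation is exactly C(d+3, 3) + C(d+2, 3). -/
open Polynomial

lemma binomPoly_coeff_of_le (c : ℤ) (j m : ℕ) (hm : j ≤ m) :
    (binomPoly c j).coeff m = if j = m then ((j.factorial : ℚ))⁻¹ else 0 := by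
  have hmonic : (∏ k ∈ Finset.range j, (X + C ((c : ℚ) - (k : ℚ)))).Monic :=
    monic_prod_of_monic _ _ fun k _ => monic_X_add_C _
  have hdeg : (∏ k ∈ Finset.range j, (X + C ((c : ℚ) - (k : ℚ)))).natDegree = j := by
    have h := natDegree_prod_of_monic (Finset.range j)
      (fun k => X + C ((c : ℚ) - (k : ℚ))) (fun k _ => monic_X_add_C _)
    rw [h]
    simp only [natDegree_X_add_C, Finset.sum_const, smul_eq_mul, mul_one, Finset.card_range]
  rw [binomPoly, coeff_smul]
  rcases eq_or_lt_of_le hm with h | h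
  · subst h
    rw [if_pos rfl]
    have h2 := hmonic.coeff_natDegree
    rw [hdeg] at h2
    rw [h2]
    simp
  · rw [if_neg h.ne, coeff_eq_zero_of_natDegree_lt (by rw [hdeg]; exact h)]
    simp

/-- If `P ∈ ℚ[d]` has degree `3` and leading coefficient `1/3`, and admits a
Gotzmann representation with exponents `a_1 ≥ a_2 ≥ ⋯ ≥ a_s ≥ 0` (0-indexed list `a` here),
then `s ≥ 2`, `a_1 = a_2 = 3`, and `a_i ≤ 2` for `i ≥ 3`; i.e. the degree-3 part of the
representation is exactly `C(d+3,3) + C(d+2,3)`. -/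
theorem gotzmann_rep_cubic_leading_part (P : Polynomial ℚ)
    (hdeg : P.natDegree = 3) (hlc : P.coeff 3 = 1/3)
    (a : List ℕ) (hrep : IsGotzmannRep P a) :
    2 ≤ a.length ∧ a.getD 0 0 = 3 ∧ a.getD 1 0 = 3 ∧ ∀ i : ℕ, 2 ≤ i → a.getD i 0 ≤ 2 := by
  obtain ⟨hsort, hP⟩ := hrep
  have hmono : ∀ i j : ℕ, i ≤ j → a.getD j 0 ≤ a.getD i 0 := by
    intro i j hij
    by_cases hj : j < a.length
    · rcases eq_or_lt_of_le hij with rfl | hlt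
      · exact le_refl _
      · have hi : i < a.length := lt_of_le_of_lt hij hj
        rw [List.getD_eq_getElem a 0 hj, List.getD_eq_getElem a 0 hi]
        exact List.pairwise_iff_getElem.mp hsort i j hi hj hlt
    · rw [List.getD_eq_default a 0 (le_of_not_gt hj)]
      exact Nat.zero_le _
  have hcoeff : ∀ m : ℕ, (∀ i ∈ Finset.range a.length, a.getD i 0 ≤ m) →
      P.coeff m = ∑ i ∈ Finset.range a.length,
        (if a.getD i 0 = m then ((m.factorial : ℚ))⁻¹ else 0) := by
    intro m hle
    rw [hP, Polynomial.finset_sum_coeff]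
    refine Finset.sum_congr rfl fun i hi => ?_
    rw [binomPoly_coeff_of_le _ _ _ (hle i hi)]
    by_cases h : a.getD i 0 = m
    · subst h; rfl
    · rw [if_neg h, if_neg h]
  have hne : a.length ≠ 0 := by
    intro h0
    rw [hP, h0] at hlc
    norm_num at hlc
  have h03 : a.getD 0 0 ≤ 3 := by
    by_contra h
    push_neg at h
    have hle : ∀ i ∈ Finset.range a.length, a.getD i 0 ≤ a.getD 0 0 :=
      fun i _ => hmono 0 i (Nat.zero_le i)
    have hc := hcoeff (a.getD 0 0) hle
    rw [coeff_eq_zero_of_natDegree_lt (by rw [hdeg]; exact h)] at hc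
    have h0mem : 0 ∈ Finset.range a.length := Finset.mem_range.mpr (Nat.pos_of_ne_zero hne)
    have hzero := (Finset.sum_eq_zero_iff_of_nonneg
      (fun i _ => by split <;> positivity)).mp hc.symm 0 h0mem
    rw [if_pos rfl] at hzero
    rw [inv_eq_zero, Nat.cast_eq_zero] at hzero
    exact (Nat.factorial_pos _).ne' hzero
  have hall3 : ∀ i ∈ Finset.range a.length, a.getD i 0 ≤ 3 :=
    fun i _ => le_trans (hmono 0 i (Nat.zero_le i)) h03
  have hc3 := hcoeff 3 hall3
  rw [hlc] at hc3
  set T : Finset ℕ := (Finset.range a.length).filter (fun i => a.getD i 0 = 3) with hT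
  have hsum : (1/3 : ℚ) = (T.card : ℚ) * ((Nat.factorial 3 : ℚ))⁻¹ := by
    rw [hc3, ← Finset.sum_filter, Finset.sum_const, nsmul_eq_mul]
  have hcard : T.card = 2 := by
    have h2 : (T.card : ℚ) = 2 := by
      rw [show ((Nat.factorial 3 : ℚ)) = 6 by norm_num [Nat.factorial]] at hsum
      field_simp at hsum
      linarith
    exact_mod_cast h2
  have hTdc : ∀ j ∈ T, ∀ i ≤ j, i ∈ T := by
    intro j hj i hij
    rw [hT, Finset.mem_filter, Finset.mem_range] at hj ⊢
    have hi : i < a.length := lt_of_le_of_lt hij hj.1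
    exact ⟨hi, le_antisymm (hall3 i (Finset.mem_range.mpr hi)) (hj.2 ▸ hmono i j hij)⟩
  have hT0 : 0 ∈ T := by
    obtain ⟨j, hj⟩ := Finset.card_pos.mp (by rw [hcard]; norm_num)
    exact hTdc j hj 0 (Nat.zero_le j)
  have hT1 : 1 ∈ T := by
    by_contra h1
    have hsub : T ⊆ {0} := by
      intro i hi
      rcases Nat.eq_zero_or_pos i with rfl | hpos
      · simp
      · exact absurd (hTdc i hi 1 hpos) h1
    have hle := Finset.card_le_card hsub
    rw [hcard, Finset.card_singleton] at hle
    omega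
  have hlen : 2 ≤ a.length := by
    have h1r := (Finset.mem_filter.mp hT1).1
    have := Finset.mem_range.mp h1r
    omega
  refine ⟨hlen, (Finset.mem_filter.mp hT0).2, (Finset.mem_filter.mp hT1).2, ?_⟩
  intro i hi
  by_cases hil : i < a.length
  · by_contra h2
    push_neg at h2
    have hfi : a.getD i 0 = 3 := le_antisymm (hall3 i (Finset.mem_range.mpr hil)) h2
    have hiT : i ∈ T := Finset.mem_filter.mpr ⟨Finset.mem_range.mpr hil, hfi⟩
    have hsub : ({0, 1, i} : Finset ℕ) ⊆ T := by
      intro x hx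
      simp only [Finset.mem_insert, Finset.mem_singleton] at hx
      rcases hx with rfl | rfl | rfl
      · exact hT0
      · exact hT1
      · exact hiT
    have hle := Finset.card_le_card hsub
    have hcard3 : ({0, 1, i} : Finset ℕ).card = 3 := by
      rw [Finset.card_insert_of_notMem (by simp; omega),
        Finset.card_insert_of_notMem (by simp; omega), Finset.card_singleton]
    omega
  · rw [List.getD_eq_default a 0 (le_of_not_gt hil)]
    norm_num
end

section
/- Let c_1, c_2 ∈ ℤ and c_0 ∈ ℚ, and let P(d) = (1/3)d³ + (2 + c_1/2)d² + (c_1²/2 + 2c_1 + 11/3 − c_2)d + c_0. If P admits a Gotzmann representation, then c_1 ≥ −1 and c_2 ≤ c_1² + 3c_1 + 2. -/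
open Polynomial

section helpers

lemma bp_monic_prod (c : ℤ) (j : ℕ) :
    (∏ k ∈ Finset.range j, (X + C (((c : ℤ) : ℚ) - (k : ℚ)))).Monic :=
  monic_prod_of_monic _ _ fun _ _ => monic_X_add_C _

lemma bp_prod_natDegree (c : ℤ) (j : ℕ) :
    (∏ k ∈ Finset.range j, (X + C (((c : ℤ) : ℚ) - (k : ℚ)))).natDegree = j := by
  rw [natDegree_prod_of_monic _ _ fun k _ => monic_X_add_C _]
  simp only [natDegree_X_add_C, Finset.sum_const, smul_eq_mul, mul_one, Finset.card_range]

lemma binomPoly_coeff_of_lt (c : ℤ) {j N : ℕ} (h : j < N) :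
    (binomPoly c j).coeff N = 0 := by
  unfold binomPoly
  rw [coeff_smul, coeff_eq_zero_of_natDegree_lt, smul_zero]
  rw [bp_prod_natDegree]; exact h

lemma binomPoly_coeff_self (c : ℤ) (j : ℕ) :
    (binomPoly c j).coeff j = (j.factorial : ℚ)⁻¹ := by
  unfold binomPoly
  rw [coeff_smul]
  have h := (bp_monic_prod c j).coeff_natDegree
  rw [bp_prod_natDegree] at h
  rw [h, smul_eq_mul, mul_one]

lemma prod3 (a b d : ℚ) : (X + C a) * (X + C b) * (X + C d) =
    X^3 + C (a+b+d)*X^2 + C (a*b+a*d+b*d)*X + C (a*b*d) := by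
  simp only [map_add, map_mul]; ring

lemma prod2 (a b : ℚ) : (X + C a) * (X + C b) =
    X^2 + C (a+b)*X + C (a*b) := by
  simp only [map_add, map_mul]; ring

lemma cubic_coeff_two (e2 e1 e0 : ℚ) :
    (X^3 + C e2*X^2 + C e1*X + C e0).coeff 2 = e2 := by
  simp [coeff_X_pow]

lemma cubic_coeff_one (e2 e1 e0 : ℚ) :
    (X^3 + C e2*X^2 + C e1*X + C e0).coeff 1 = e1 := by
  simp [coeff_X_pow]

lemma quad_coeff_one (e1 e0 : ℚ) :
    (X^2 + C e1*X + C e0).coeff 1 = e1 := by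
  simp [coeff_X_pow]

lemma bp3_expand (c : ℤ) : binomPoly c 3 = (6:ℚ)⁻¹ •
    ((X + C ((c:ℚ))) * (X + C ((c:ℚ)-1)) * (X + C ((c:ℚ)-2))) := by
  unfold binomPoly
  rw [Finset.prod_range_succ, Finset.prod_range_succ, Finset.prod_range_one]
  norm_num [Nat.factorial]

lemma bp2_expand (c : ℤ) : binomPoly c 2 = (2:ℚ)⁻¹ •
    ((X + C ((c:ℚ))) * (X + C ((c:ℚ)-1))) := by
  unfold binomPoly
  rw [Finset.prod_range_succ, Finset.prod_range_one]
  norm_num [Nat.factorial]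

lemma bp3_coeff_two (c : ℤ) : (binomPoly c 3).coeff 2 = ((c:ℚ)-1)/2 := by
  rw [bp3_expand, coeff_smul, prod3, cubic_coeff_two, smul_eq_mul]; ring

lemma bp3_coeff_one (c : ℤ) : (binomPoly c 3).coeff 1 = (3*(c:ℚ)^2-6*c+2)/6 := by
  rw [bp3_expand, coeff_smul, prod3, cubic_coeff_one, smul_eq_mul]; ring

lemma bp2_coeff_one (c : ℤ) : (binomPoly c 2).coeff 1 = (2*(c:ℚ)-1)/2 := by
  rw [bp2_expand, coeff_smul, prod2, quad_coeff_one, smul_eq_mul]; ring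

lemma bp1_coeff_one (c : ℤ) : (binomPoly c 1).coeff 1 = 1 := by
  have := binomPoly_coeff_self c 1
  simpa using this

lemma lhs_coeff (A B c0 : ℚ) (N : ℕ) :
    (C (1/3:ℚ) * X^3 + C A * X^2 + C B * X + C c0).coeff N =
      (if N = 3 then 1/3 else 0) + (if N = 2 then A else 0) +
      (if N = 1 then B else 0) + (if N = 0 then c0 else 0) := by
  rcases N with _|_|_|_|N <;>
    simp [coeff_add, coeff_C_mul, coeff_X_pow, coeff_X, coeff_C]

lemma sum_lin (m : ℕ) : ∑ j ∈ Finset.range m, ((-1 : ℚ) - 2*j)/2 = -(m:ℚ)^2/2 := by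
  induction m with
  | zero => simp
  | succ k ih => rw [Finset.sum_range_succ, ih]; push_cast; ring

end helpers

/-- Let `c₁, c₂ ∈ ℤ`, `c₀ ∈ ℚ`, and
`P(d) = (1/3)d³ + (2 + c₁/2)d² + (c₁²/2 + 2c₁ + 11/3 - c₂)d + c₀`. If `P` admits a
Gotzmann representation, then `c₁ ≥ -1` and `c₂ ≤ c₁² + 3c₁ + 2`. -/
theorem chern_class_bound_of_gotzmann_rep (c1 c2 : ℤ) (c0 : ℚ)
    (hP : HasGotzmannRep
      (C (1/3 : ℚ) * X ^ 3 + C ((2 : ℚ) + (c1 : ℚ) / 2) * X ^ 2 +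
        C ((c1 : ℚ) ^ 2 / 2 + 2 * (c1 : ℚ) + 11/3 - (c2 : ℚ)) * X + C c0)) :
    -1 ≤ c1 ∧ c2 ≤ c1 ^ 2 + 3 * c1 + 2 := by
  obtain ⟨a, hsort, hPeq⟩ := hP
  obtain ⟨n, f, hanti, hzero, key⟩ :
      ∃ (n : ℕ) (f : ℕ → ℕ), (∀ i j, i ≤ j → f j ≤ f i) ∧ (∀ i, n ≤ i → f i = 0) ∧
        ∀ N, (C (1/3 : ℚ) * X ^ 3 + C ((2 : ℚ) + (c1 : ℚ) / 2) * X ^ 2 +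
          C ((c1 : ℚ) ^ 2 / 2 + 2 * (c1 : ℚ) + 11/3 - (c2 : ℚ)) * X + C c0).coeff N =
          ∑ i ∈ Finset.range n, (binomPoly ((f i : ℤ) - i) (f i)).coeff N := by
    refine ⟨a.length, fun i => a.getD i 0, ?_, ?_, ?_⟩
    · intro i j hij
      by_cases hj : j < a.length
      · have hi : i < a.length := lt_of_le_of_lt hij hj
        have h := hsort.rel_get_of_le (a := ⟨i, hi⟩) (b := ⟨j, hj⟩) hij
        show a.getD j 0 ≤ a.getD i 0
        rw [List.getD_eq_getElem _ _ hi, List.getD_eq_getElem _ _ hj]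
        exact h
      · show a.getD j 0 ≤ a.getD i 0
        rw [List.getD_eq_default _ _ (le_of_not_gt hj)]
        exact Nat.zero_le _
    · intro i hi; exact List.getD_eq_default _ _ hi
    · intro N; rw [hPeq, finset_sum_coeff]
  -- every entry is at most 3
  have hb : ∀ i, f i ≤ 3 := by
    intro i
    have h0 : f i ≤ f 0 := hanti 0 i (Nat.zero_le i)
    by_contra hc
    push_neg at hc
    have hN4 : 4 ≤ f 0 := by omega
    have h0n : 0 < n := by
      by_contra h
      have := hzero 0 (by omega)
      omega
    have hL : (C (1/3 : ℚ) * X ^ 3 + C ((2 : ℚ) + (c1 : ℚ) / 2) * X ^ 2 +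
        C ((c1 : ℚ) ^ 2 / 2 + 2 * (c1 : ℚ) + 11/3 - (c2 : ℚ)) * X + C c0).coeff (f 0) = 0 := by
      rw [lhs_coeff]
      have h3 : f 0 ≠ 3 := by omega
      have h2 : f 0 ≠ 2 := by omega
      have h1 : f 0 ≠ 1 := by omega
      have h0' : f 0 ≠ 0 := by omega
      simp [h3, h2, h1, h0']
    have hpos : 0 < ∑ i ∈ Finset.range n, (binomPoly ((f i : ℤ) - i) (f i)).coeff (f 0) := by
      apply Finset.sum_pos'
      · intro j _
        rcases lt_or_eq_of_le (hanti 0 j (Nat.zero_le j)) with h | h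
        · rw [binomPoly_coeff_of_lt _ h]
        · rw [h, binomPoly_coeff_self]
          positivity
      · refine ⟨0, Finset.mem_range.mpr h0n, ?_⟩
        rw [binomPoly_coeff_self]
        positivity
    rw [← key (f 0), hL] at hpos
    exact lt_irrefl 0 hpos
  have hfn : f n = 0 := hzero n le_rfl
  have hex3 : ∃ i, f i < 3 := ⟨n, by omega⟩
  have hex2 : ∃ i, f i < 2 := ⟨n, by omega⟩
  have hex1 : ∃ i, f i < 1 := ⟨n, by omega⟩
  set b3 := Nat.find hex3 with hb3def
  set b2 := Nat.find hex2 with hb2def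
  set b1 := Nat.find hex1 with hb1def
  have hlt3 : ∀ i, i < b3 → f i = 3 := by
    intro i hi
    have h := Nat.find_min hex3 hi
    have := hb i
    omega
  have hge3 : ∀ i, b3 ≤ i → f i ≤ 2 := by
    intro i hi
    have h1 := Nat.find_spec hex3
    rw [← hb3def] at h1
    have := hanti b3 i hi
    omega
  have hlt2 : ∀ i, i < b2 → 2 ≤ f i := by
    intro i hi
    have h := Nat.find_min hex2 hi
    omega
  have hge2 : ∀ i, b2 ≤ i → f i ≤ 1 := by
    intro i hi
    have h1 := Nat.find_spec hex2
    rw [← hb2def] at h1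
    have := hanti b2 i hi
    omega
  have hlt1 : ∀ i, i < b1 → 1 ≤ f i := by
    intro i hi
    have h := Nat.find_min hex1 hi
    omega
  have hge1 : ∀ i, b1 ≤ i → f i = 0 := by
    intro i hi
    have h1 := Nat.find_spec hex1
    rw [← hb1def] at h1
    have := hanti b1 i hi
    omega
  have hb3n : b3 ≤ n := by
    rw [hb3def]; exact Nat.find_le (by omega)
  have hb2n : b2 ≤ n := by
    rw [hb2def]; exact Nat.find_le (by omega)
  have hb1n : b1 ≤ n := by
    rw [hb1def]; exact Nat.find_le (by omega)
  have hb21 : b2 ≤ b1 := by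
    rw [hb2def]
    refine Nat.find_le ?_
    have h1 := Nat.find_spec hex1
    rw [← hb1def] at h1
    omega
  -- the coefficient-3 equation : b3 = 2
  have hb3 : b3 = 2 := by
    have h3 := key 3
    rw [lhs_coeff] at h3
    norm_num at h3
    rw [Finset.range_eq_Ico, ← Finset.sum_Ico_consecutive _ (Nat.zero_le b3) hb3n] at h3
    have hA : ∑ i ∈ Finset.Ico 0 b3, (binomPoly ((f i : ℤ) - i) (f i)).coeff 3
        = (b3 : ℚ) * (1/6) := by
      have hc : ∀ i ∈ Finset.Ico 0 b3, (binomPoly ((f i : ℤ) - i) (f i)).coeff 3 = (1/6 : ℚ) := by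
        intro i hi
        rw [hlt3 i (Finset.mem_Ico.mp hi).2, binomPoly_coeff_self]
        norm_num [Nat.factorial]
      rw [Finset.sum_congr rfl hc, Finset.sum_const, Nat.card_Ico, Nat.sub_zero, nsmul_eq_mul]
    have hB : ∑ i ∈ Finset.Ico b3 n, (binomPoly ((f i : ℤ) - i) (f i)).coeff 3 = 0 := by
      apply Finset.sum_eq_zero
      intro i hi
      exact binomPoly_coeff_of_lt _ (by have := hge3 i (Finset.mem_Ico.mp hi).1; omega)
    rw [hA, hB, add_zero] at h3
    have : (b3 : ℚ) = 2 := by linarith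
    exact_mod_cast this
  have hf0 : f 0 = 3 := hlt3 0 (by omega)
  have hf1 : f 1 = 3 := hlt3 1 (by omega)
  have hb2ge : 2 ≤ b2 := by
    by_contra h
    have := hge2 1 (by omega)
    omega
  -- the coefficient-2 equation : (c1 : ℚ) = b2 - 3
  have hc1 : (c1 : ℚ) = (b2 : ℚ) - 3 := by
    have h2 := key 2
    rw [lhs_coeff] at h2
    norm_num at h2
    rw [Finset.range_eq_Ico, ← Finset.sum_Ico_consecutive _ (Nat.zero_le b2) hb2n,
      ← Finset.sum_Ico_consecutive _ (Nat.zero_le 2) hb2ge] at h2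
    have hA : ∑ i ∈ Finset.Ico 0 2, (binomPoly ((f i : ℤ) - i) (f i)).coeff 2 = (3/2 : ℚ) := by
      rw [show Finset.Ico 0 2 = Finset.range 2 from by rw [Finset.range_eq_Ico],
        Finset.sum_range_succ, Finset.sum_range_one, hf0, hf1]
      norm_num [bp3_coeff_two]
    have hB : ∑ i ∈ Finset.Ico 2 b2, (binomPoly ((f i : ℤ) - i) (f i)).coeff 2
        = ((b2 : ℚ) - 2) * (1/2) := by
      have hc : ∀ i ∈ Finset.Ico 2 b2, (binomPoly ((f i : ℤ) - i) (f i)).coeff 2 = (1/2 : ℚ) := by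
        intro i hi
        rcases Finset.mem_Ico.mp hi with ⟨hi2, hib2⟩
        have : f i = 2 := by
          have := hge3 i (by omega)
          have := hlt2 i hib2
          omega
        rw [this, binomPoly_coeff_self]
        norm_num [Nat.factorial]
      rw [Finset.sum_congr rfl hc, Finset.sum_const, Nat.card_Ico, nsmul_eq_mul]
      push_cast [hb2ge]
      ring
    have hC : ∑ i ∈ Finset.Ico b2 n, (binomPoly ((f i : ℤ) - i) (f i)).coeff 2 = 0 := by
      apply Finset.sum_eq_zero
      intro i hi
      exact binomPoly_coeff_of_lt _ (by have := hge2 i (Finset.mem_Ico.mp hi).1; omega)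
    rw [hA, hB, hC, add_zero] at h2
    linarith
  have hm1 : (-1 : ℤ) ≤ c1 := by
    have h2 : (2 : ℚ) ≤ (b2 : ℚ) := by exact_mod_cast hb2ge
    have : (-1 : ℚ) ≤ (c1 : ℚ) := by rw [hc1]; linarith
    exact_mod_cast this
  refine ⟨hm1, ?_⟩
  -- the coefficient-1 equation
  have h1 := key 1
  rw [lhs_coeff] at h1
  norm_num at h1
  rw [Finset.range_eq_Ico, ← Finset.sum_Ico_consecutive _ (Nat.zero_le b1) hb1n,
    ← Finset.sum_Ico_consecutive _ (Nat.zero_le b2) hb21,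
    ← Finset.sum_Ico_consecutive _ (Nat.zero_le 2) hb2ge] at h1
  have hA : ∑ i ∈ Finset.Ico 0 2, (binomPoly ((f i : ℤ) - i) (f i)).coeff 1 = (13/6 : ℚ) := by
    rw [show Finset.Ico 0 2 = Finset.range 2 from by rw [Finset.range_eq_Ico],
      Finset.sum_range_succ, Finset.sum_range_one, hf0, hf1]
    norm_num [bp3_coeff_one]
  have hB : ∑ i ∈ Finset.Ico 2 b2, (binomPoly ((f i : ℤ) - i) (f i)).coeff 1
      = -((b2 : ℚ) - 2)^2/2 := by
    have hc : ∀ i ∈ Finset.Ico 2 b2, (binomPoly ((f i : ℤ) - i) (f i)).coeff 1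
        = ((-1 : ℚ) - 2*(i - 2 : ℕ))/2 := by
      intro i hi
      rcases Finset.mem_Ico.mp hi with ⟨hi2, hib2⟩
      have hfi : f i = 2 := by
        have := hge3 i (by omega)
        have := hlt2 i hib2
        omega
      rw [hfi, bp2_coeff_one]
      have : ((i - 2 : ℕ) : ℚ) = (i : ℚ) - 2 := by push_cast [hi2]; ring
      rw [this]
      push_cast
      ring
    rw [Finset.sum_congr rfl hc, Finset.sum_Ico_eq_sum_range]
    have : ∀ j ∈ Finset.range (b2 - 2), ((-1 : ℚ) - 2*((2 + j) - 2 : ℕ))/2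
        = ((-1 : ℚ) - 2*(j : ℕ))/2 := by
      intro j _
      norm_num
    rw [Finset.sum_congr rfl this, sum_lin]
    have : ((b2 - 2 : ℕ) : ℚ) = (b2 : ℚ) - 2 := by push_cast [hb2ge]; ring
    rw [this]
  have hC : ∑ i ∈ Finset.Ico b2 b1, (binomPoly ((f i : ℤ) - i) (f i)).coeff 1
      = (b1 : ℚ) - (b2 : ℚ) := by
    have hc : ∀ i ∈ Finset.Ico b2 b1, (binomPoly ((f i : ℤ) - i) (f i)).coeff 1 = (1 : ℚ) := by
      intro i hi
      rcases Finset.mem_Ico.mp hi with ⟨hib2, hib1⟩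
      have hfi : f i = 1 := by
        have := hge2 i hib2
        have := hlt1 i hib1
        omega
      rw [hfi, bp1_coeff_one]
    rw [Finset.sum_congr rfl hc, Finset.sum_const, Nat.card_Ico, nsmul_eq_mul, mul_one]
    push_cast [hb21]
    ring
  have hD : ∑ i ∈ Finset.Ico b1 n, (binomPoly ((f i : ℤ) - i) (f i)).coeff 1 = 0 := by
    apply Finset.sum_eq_zero
    intro i hi
    exact binomPoly_coeff_of_lt _ (by have := hge1 i (Finset.mem_Ico.mp hi).1; omega)
  rw [hA, hB, hC, hD, add_zero] at h1
  have hb1b2 : (b2 : ℚ) ≤ (b1 : ℚ) := by exact_mod_cast hb21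
  have hgoal : (c2 : ℚ) ≤ (c1 : ℚ)^2 + 3*(c1 : ℚ) + 2 := by nlinarith [hc1, h1, hb1b2]
  have : (c2 : ℚ) ≤ ((c1^2 + 3*c1 + 2 : ℤ) : ℚ) := by push_cast; exact hgoal
  exact_mod_cast this
end

section
/- Let m and n be integers with 0 ≤ m ≤ n, and let e_0, e_1, …, e_n be nonnegative integers such that ∑_{i=0}^n e_i = m and ∑_{i=0}^n i·e_i = n. Then ∑_{0 ≤ i ≤ j ≤ n} (j − i + 1) e_i e_j ≥ m². -/
/-- Let `0 ≤ m ≤ n` and let `e_0, …, e_n` be nonnegative integers with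
`∑ e_i = m` and `∑ i·e_i = n`. Then `∑_{0 ≤ i ≤ j ≤ n} (j - i + 1) e_i e_j ≥ m²`. -/
theorem quadratic_form_ge_sq (m n : ℕ) (hmn : m ≤ n) (e : ℕ → ℕ)
    (h1 : ∑ i ∈ Finset.range (n + 1), e i = m)
    (h2 : ∑ i ∈ Finset.range (n + 1), i * e i = n) :
    m ^ 2 ≤ ∑ i ∈ Finset.range (n + 1), ∑ j ∈ Finset.Icc i n, (j - i + 1) * (e i * e j) := by
  have key : m ^ 2 =
      ∑ i ∈ Finset.range (n + 1), ∑ j ∈ Finset.range (n + 1), e i * e j := by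
    rw [sq, ← h1, Finset.sum_mul_sum]
  have hsplit : ∀ i ∈ Finset.range (n + 1),
      ∑ j ∈ Finset.range (n + 1), e i * e j =
        (∑ j ∈ Finset.Ico 0 i, e i * e j) + ∑ j ∈ Finset.Ico i (n + 1), e i * e j := by
    intro i hi
    rw [Finset.mem_range] at hi
    rw [Finset.sum_Ico_consecutive _ (Nat.zero_le i) (by omega), Finset.range_eq_Ico]
  rw [key, Finset.sum_congr rfl hsplit, Finset.sum_add_distrib]
  have hswap : (∑ i ∈ Finset.range (n + 1), ∑ j ∈ Finset.Ico 0 i, e i * e j) =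
      ∑ i ∈ Finset.range (n + 1), ∑ j ∈ Finset.Ico (i + 1) (n + 1), e j * e i := by
    rw [Finset.range_eq_Ico, Finset.sum_Ico_Ico_comm' 0 (n + 1) (fun i j => e j * e i)]
  rw [hswap, ← Finset.sum_add_distrib]
  apply Finset.sum_le_sum
  intro i hi
  rw [Finset.mem_range] at hi
  rw [← Finset.Ico_add_one_right_eq_Icc]
  have hins : Finset.Ico i (n + 1) = insert i (Finset.Ico (i + 1) (n + 1)) := by
    ext x
    simp only [Finset.mem_Ico, Finset.mem_insert]
    omega
  rw [hins, Finset.sum_insert (by simp), Finset.sum_insert (by simp)]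
  have hAB : ∑ j ∈ Finset.Ico (i + 1) (n + 1), (e j * e i + e i * e j) ≤
      ∑ j ∈ Finset.Ico (i + 1) (n + 1), (j - i + 1) * (e i * e j) := by
    apply Finset.sum_le_sum
    intro j hj
    rw [Finset.mem_Ico] at hj
    have h2' : 2 ≤ j - i + 1 := by omega
    calc e j * e i + e i * e j = 2 * (e i * e j) := by ring
      _ ≤ (j - i + 1) * (e i * e j) := Nat.mul_le_mul_right _ h2'
  rw [Finset.sum_add_distrib] at hAB
  have : (i - i + 1) * (e i * e i) = e i * e i := by simp
  omega
end

section
/- Let m and n be integers with 1 ≤ m ≤ n. Among all tuples (e_0, e_1, …, e_n) of nonnegative integers with ∑_{i=0}^n e_i = m and ∑_{i=0}^n i·e_i = n, there is exactly one for which ∑_{0 ≤ i ≤ j ≤ n} (j − i + 1) e_i e_j = m², namely the tuple with e_q = m − r, e_{q+1} = r, and all other entries zero, where n = qm + r with 0 ≤ r < m. -/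
open Finset

def Psum (e : ℕ → ℕ) (k : ℕ) : ℕ := ∑ i ∈ range (k + 1), e i

lemma L1 (e : ℕ → ℕ) (M : ℕ) :
    ∑ k ∈ range (M + 1), Psum e k = ∑ i ∈ range (M + 1), (M + 1 - i) * e i := by
  induction M with
  | zero => simp [Psum]
  | succ M ih =>
    rw [Finset.sum_range_succ, ih]
    have h : ∑ i ∈ range (M + 2), (M + 2 - i) * e i
        = ∑ i ∈ range (M + 2), ((M + 1 - i) * e i + e i) := by
      apply Finset.sum_congr rfl
      intro i hi
      simp only [Finset.mem_range] at hi
      have : M + 2 - i = (M + 1 - i) + 1 := by omega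
      rw [this]; ring
    have h2 : ∑ i ∈ range (M + 2), (M + 1 - i) * e i
        = ∑ i ∈ range (M + 1), (M + 1 - i) * e i := by
      rw [Finset.sum_range_succ]; simp
    rw [h, Finset.sum_add_distrib, h2]
    rfl

lemma key_identity (e : ℕ → ℕ) (N : ℕ) :
    (∑ i ∈ range (N + 1), ∑ j ∈ Icc i N, (j - i + 1) * (e i * e j))
      + ∑ k ∈ range N, Psum e k * Psum e (k + 1)
    = Psum e N ^ 2 + (∑ k ∈ range N, Psum e k) * Psum e N := by
  induction N with
  | zero => simp [Psum]; ring
  | succ N ih =>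
    -- split inner Icc
    have hsplit : ∀ i ∈ range (N + 2),
        ∑ j ∈ Icc i (N + 1), (j - i + 1) * (e i * e j)
        = (N + 1 - i + 1) * (e i * e (N + 1)) + ∑ j ∈ Icc i N, (j - i + 1) * (e i * e j) := by
      intro i hi
      simp only [mem_range] at hi
      have h1 : Icc i (N + 1) = insert (N + 1) (Icc i N) := by
        ext x; simp [mem_Icc, mem_insert]; omega
      rw [h1, Finset.sum_insert (by simp [mem_Icc])]
    rw [Finset.sum_congr rfl hsplit, Finset.sum_add_distrib]
    have hQ : ∑ i ∈ range (N + 2), ∑ j ∈ Icc i N, (j - i + 1) * (e i * e j)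
        = ∑ i ∈ range (N + 1), ∑ j ∈ Icc i N, (j - i + 1) * (e i * e j) := by
      rw [Finset.sum_range_succ]
      have : Icc (N + 1) N = ∅ := by simp
      simp [this]
    have hcol : ∑ i ∈ range (N + 2), (N + 1 - i + 1) * (e i * e (N + 1))
        = (∑ k ∈ range (N + 2), Psum e k) * e (N + 1) := by
      rw [L1, Finset.sum_mul]
      apply Finset.sum_congr rfl
      intro i hi
      simp only [mem_range] at hi
      have : N + 1 - i + 1 = N + 2 - i := by omega
      rw [this]; ring
    rw [hQ, hcol]
    -- unfold the range sums
    rw [Finset.sum_range_succ (fun k => Psum e k * Psum e (k + 1)),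
        Finset.sum_range_succ (fun k => Psum e k) (N + 1),
        Finset.sum_range_succ (fun k => Psum e k) N]
    have hS : Psum e (N + 1) = Psum e N + e (N + 1) := by
      simp [Psum, Finset.sum_range_succ]
    set Q := ∑ i ∈ range (N + 1), ∑ j ∈ Icc i N, (j - i + 1) * (e i * e j) with hQdef
    set A := ∑ k ∈ range N, Psum e k * Psum e (k + 1) with hAdef
    set C := ∑ k ∈ range N, Psum e k with hCdef
    set S := Psum e N
    set S' := Psum e (N + 1)
    zify at ih hS ⊢
    linear_combination ih - (C + S + S') * hS

lemma bwd (m n : ℕ) (hm : 1 ≤ m) :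
    ∀ k ∈ range n,
      Psum (fun i => if i = n / m then m - n % m else if i = n / m + 1 then n % m else 0) k = 0 ∨
      Psum (fun i => if i = n / m then m - n % m else if i = n / m + 1 then n % m else 0) (k + 1) = m := by
  have hr : n % m < m := Nat.mod_lt _ hm
  have hP : ∀ k, Psum (fun i => if i = n / m then m - n % m else if i = n / m + 1 then n % m else 0) k
      = (if n / m ≤ k then m - n % m else 0) + (if n / m + 1 ≤ k then n % m else 0) := by
    intro k
    unfold Psum
    have he : ∀ i, (if i = n / m then m - n % m else if i = n / m + 1 then n % m else 0)
        = (if i = n / m then m - n % m else 0) + (if i = n / m + 1 then n % m else 0) := by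
      intro i
      by_cases h : i = n / m
      · simp [h, Nat.ne_of_lt (Nat.lt_succ_self (n / m))]
      · simp [h]
    rw [Finset.sum_congr rfl (fun i _ => he i), Finset.sum_add_distrib,
        Finset.sum_ite_eq' (range (k + 1)) (n / m), Finset.sum_ite_eq' (range (k + 1)) (n / m + 1)]
    simp [Nat.lt_succ_iff, Nat.succ_le_iff]
  intro k hk
  simp only [mem_range] at hk
  rcases le_or_gt (n / m) k with h | h
  · right
    rw [hP]
    have h1 : n / m ≤ k + 1 := by omega
    have h2 : n / m + 1 ≤ k + 1 := by omega
    simp [h1, h2]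
    omega
  · left
    rw [hP]
    have h1 : ¬ (n / m ≤ k) := by omega
    have h2 : ¬ (n / m + 1 ≤ k) := by omega
    simp [h1, h2]

lemma fwd (m n : ℕ) (hm : 1 ≤ m) (hmn : m ≤ n) (e : ℕ → ℕ)
    (hsupp : ∀ i, n < i → e i = 0)
    (h1 : ∑ i ∈ range (n + 1), e i = m)
    (h2 : ∑ i ∈ range (n + 1), i * e i = n)
    (crit : ∀ k ∈ range n, Psum e k = 0 ∨ Psum e (k + 1) = m) :
    e = fun i => if i = n / m then m - n % m else if i = n / m + 1 then n % m else 0 := by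
  have hex : ∃ i, e i ≠ 0 := by
    by_contra h
    push_neg at h
    simp only [h, Finset.sum_const_zero] at h1
    omega
  set q := Nat.find hex with hqdef
  have hq : e q ≠ 0 := Nat.find_spec hex
  have hmin : ∀ i, i < q → e i = 0 := by
    intro i hi
    have := Nat.find_min hex hi
    simpa using this
  have hqn : q ≤ n := by
    by_contra h
    exact hq (hsupp q (by omega))
  -- support in {q, q+1}
  have hsup2 : ∀ i, i ≠ q → i ≠ q + 1 → e i = 0 := by
    intro i hi1 hi2
    rcases lt_trichotomy i q with h | h | h
    · exact hmin i h
    · exact absurd h hi1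
    · have hi : q + 2 ≤ i := by omega
      rcases le_or_gt i n with hin | hin
      · -- q < n, so crit applies at q
        have hqln : q < n := by omega
        have hPq : Psum e q ≠ 0 := by
          have : e q ≤ Psum e q :=
            Finset.single_le_sum (f := e) (fun j _ => Nat.zero_le _) (by simp [mem_range])
          omega
        have hPqm : Psum e (q + 1) = m := (crit q (by simp [mem_range, hqln])).resolve_left hPq
        have hsplit : ∑ i ∈ range (n + 1), e i
            = ∑ i ∈ range (q + 2), e i + ∑ i ∈ Ico (q + 2) (n + 1), e i := by
          rw [Finset.range_eq_Ico, ← Finset.sum_Ico_consecutive _ (Nat.zero_le _) (by omega : q + 2 ≤ n + 1), Finset.range_eq_Ico]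
        have htail : ∑ i ∈ Ico (q + 2) (n + 1), e i = 0 := by
          have : ∑ i ∈ range (q + 2), e i = m := hPqm
          omega
        have := (Finset.sum_eq_zero_iff).mp htail i (by simp [mem_Ico]; omega)
        exact this
      · exact hsupp i hin
  have he : ∀ i, e i = (if i = q then e q else 0) + (if i = q + 1 then e (q + 1) else 0) := by
    intro i
    by_cases h1' : i = q
    · simp [h1', (by omega : q ≠ q + 1)]
    · by_cases h2' : i = q + 1
      · simp [h1', h2']
      · simp [h1', h2', hsup2 i h1' h2']
  have heq1 : e q + e (q + 1) = m := by
    rw [← h1, Finset.sum_congr rfl (fun i _ => he i), Finset.sum_add_distrib,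
        Finset.sum_ite_eq' (range (n + 1)) q, Finset.sum_ite_eq' (range (n + 1)) (q + 1)]
    simp only [mem_range, Nat.lt_succ_iff, hqn, if_true]
    by_cases hc : q + 1 ≤ n
    · simp [hc]
    · simp [hc, hsupp (q + 1) (by omega)]
  have heq2 : q * e q + (q + 1) * e (q + 1) = n := by
    have he2 : ∀ i, i * e i = (if i = q then q * e q else 0) + (if i = q + 1 then (q + 1) * e (q + 1) else 0) := by
      intro i
      by_cases h1' : i = q
      · simp [h1', (by omega : q ≠ q + 1)]
      · by_cases h2' : i = q + 1
        · simp [h1', h2']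
        · simp [h1', h2', hsup2 i h1' h2']
    rw [← h2, Finset.sum_congr rfl (fun i _ => he2 i), Finset.sum_add_distrib,
        Finset.sum_ite_eq' (range (n + 1)) q, Finset.sum_ite_eq' (range (n + 1)) (q + 1)]
    simp only [mem_range, Nat.lt_succ_iff, hqn, if_true]
    by_cases hc : q + 1 ≤ n
    · simp [hc]
    · simp [hc, hsupp (q + 1) (by omega)]
  have hb : e (q + 1) < m := by omega
  have hn : n = q * m + e (q + 1) := by
    have : q * e q + (q + 1) * e (q + 1) = q * (e q + e (q + 1)) + e (q + 1) := by ring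
    rw [this, heq1] at heq2
    omega
  obtain ⟨hdiv, hmod⟩ := (Nat.div_mod_unique (a := n) (b := m) (c := e (q + 1)) (d := q)
      (by omega : 0 < m)).mpr ⟨by rw [hn]; ring, hb⟩
  funext i
  rw [he i]
  show _ = if i = n / m then m - n % m else if i = n / m + 1 then n % m else 0
  rw [hdiv, hmod]
  by_cases h1' : i = q
  · subst h1'
    simp [(by omega : q ≠ q + 1)]
    omega
  · by_cases h2' : i = q + 1
    · subst h2'
      simp [(by omega : ¬ (q + 1 = q))]
    · simp [h1', h2']

/-- Let `1 ≤ m ≤ n`. Among all tuples `(e_0, …, e_n)` of nonnegative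
integers with `∑ e_i = m` and `∑ i·e_i = n`, exactly one satisfies
`∑_{0 ≤ i ≤ j ≤ n} (j - i + 1) e_i e_j = m²`, namely `e_q = m - r`, `e_{q+1} = r`,
all other entries zero, where `n = q·m + r` with `0 ≤ r < m`. -/
theorem quadratic_form_eq_sq_iff (m n : ℕ) (hm : 1 ≤ m) (hmn : m ≤ n) (e : ℕ → ℕ)
    (hsupp : ∀ i, n < i → e i = 0)
    (h1 : ∑ i ∈ Finset.range (n + 1), e i = m)
    (h2 : ∑ i ∈ Finset.range (n + 1), i * e i = n) :
    (∑ i ∈ Finset.range (n + 1), ∑ j ∈ Finset.Icc i n, (j - i + 1) * (e i * e j) = m ^ 2) ↔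
      e = fun i => if i = n / m then m - n % m else if i = n / m + 1 then n % m else 0 := by
  have hPn : Psum e n = m := h1
  have hmono : ∀ k, k ≤ n → Psum e k ≤ m := by
    intro k hk
    rw [← hPn]
    exact Finset.sum_le_sum_of_subset (Finset.range_subset_range.mpr (by omega))
  have key := key_identity e n
  rw [hPn, Finset.sum_mul] at key
  obtain ⟨M, hM⟩ : ∃ M, m ^ 2 = M := ⟨_, rfl⟩
  rw [hM] at key ⊢
  have hcrit : (∑ i ∈ Finset.range (n + 1), ∑ j ∈ Finset.Icc i n, (j - i + 1) * (e i * e j) = M)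
      ↔ ∀ k ∈ Finset.range n, Psum e k = 0 ∨ Psum e (k + 1) = m := by
    have hle : ∀ k ∈ Finset.range n, Psum e k * Psum e (k + 1) ≤ Psum e k * m := by
      intro k hk
      simp only [Finset.mem_range] at hk
      exact Nat.mul_le_mul_left _ (hmono (k + 1) (by omega))
    constructor
    · intro hQ
      rw [hQ] at key
      have hsum : ∑ k ∈ Finset.range n, Psum e k * Psum e (k + 1)
          = ∑ k ∈ Finset.range n, Psum e k * m := by omega
      intro k hk
      have heq := (Finset.sum_eq_sum_iff_of_le hle).mp hsum k hk
      rcases Nat.eq_zero_or_pos (Psum e k) with h | h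
      · exact Or.inl h
      · exact Or.inr (Nat.eq_of_mul_eq_mul_left h heq)
    · intro hall
      have hsum : ∑ k ∈ Finset.range n, Psum e k * Psum e (k + 1)
          = ∑ k ∈ Finset.range n, Psum e k * m := by
        apply Finset.sum_congr rfl
        intro k hk
        rcases hall k hk with h | h
        · simp [h]
        · rw [h]
      omega
  rw [hcrit]
  constructor
  · exact fwd m n hm hmn e hsupp h1 h2
  · intro he
    subst he
    exact bwd m n hm
end

section
/- A Gotzmann representation is unique: if integers a_1 ≥ ⋯ ≥ a_s ≥ 0 and b_1 ≥ ⋯ ≥ b_t ≥ 0 satisfy ∑_{i=1}^s C(d + a_i − (i−1), a_i) = ∑_{i=1}^t C(d + b_i − (i−1), b_i) as polynomials in d, then s = t and a_i = b_i for all i. -/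
open Polynomial

lemma prodDeg (c : ℤ) (j : ℕ) :
    (∏ k ∈ Finset.range j, (X + C ((c : ℚ) - (k : ℚ)))).natDegree = j := by
  rw [Polynomial.natDegree_prod _ _ (fun k _ => X_add_C_ne_zero _)]
  simp only [natDegree_X_add_C, Finset.sum_const, Finset.card_range, smul_eq_mul, mul_one]

lemma binomPoly_natDegree (c : ℤ) (j : ℕ) : (binomPoly c j).natDegree = j := by
  unfold binomPoly
  rw [smul_eq_C_mul, Polynomial.natDegree_C_mul (by positivity : ((j.factorial : ℚ)⁻¹) ≠ 0),
    prodDeg]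

noncomputable def gsum (m : ℕ) (a : List ℕ) : Polynomial ℚ :=
  ∑ i ∈ Finset.range a.length, binomPoly ((a.getD i 0 : ℤ) - ((i : ℤ) + (m : ℤ))) (a.getD i 0)

lemma gsum_nil (m : ℕ) : gsum m [] = 0 := by simp [gsum]

lemma gsum_cons (m : ℕ) (x : ℕ) (t : List ℕ) :
    gsum m (x :: t) = binomPoly ((x : ℤ) - m) x + gsum (m+1) t := by
  unfold gsum
  rw [List.length_cons, Finset.sum_range_succ']
  rw [add_comm]
  congr 1
  · simp
  · apply Finset.sum_congr rfl
    intro i _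
    have h1 : (x :: t).getD (i+1) 0 = t.getD i 0 := rfl
    rw [h1]
    congr 1
    push_cast; ring

lemma getD_le_head (x : ℕ) (t : List ℕ) (hs : (x :: t).Pairwise (· ≥ ·)) (i : ℕ) :
    t.getD i 0 ≤ x := by
  rcases lt_or_ge i t.length with h | h
  · refine (List.pairwise_cons.mp hs).1 _ ?_
    rw [List.getD_eq_getElem t 0 h]; exact List.getElem_mem h
  · rw [List.getD_eq_default _ _ h]; exact Nat.zero_le x

lemma coeff_gsum_head_pos (m x : ℕ) (t : List ℕ) (hs : (x :: t).Pairwise (· ≥ ·)) :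
    0 < (gsum m (x :: t)).coeff x := by
  unfold gsum
  rw [Polynomial.finset_sum_coeff]
  apply Finset.sum_pos'
  · intro i _
    set j := (x :: t).getD i 0 with hj
    rcases eq_or_lt_of_le (show j ≤ x by
      cases i with
      | zero => exact le_refl x
      | succ n => exact getD_le_head x t hs n) with h | h
    · rw [h, binomPoly_coeff_self]; positivity
    · rw [Polynomial.coeff_eq_zero_of_natDegree_lt (by rw [binomPoly_natDegree]; exact h)]
  · refine ⟨0, by simp, ?_⟩
    have : (x :: t).getD 0 0 = x := rfl
    rw [this, binomPoly_coeff_self]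
    positivity

lemma gsum_ne_zero (m x : ℕ) (t : List ℕ) (hs : (x :: t).Pairwise (· ≥ ·)) :
    gsum m (x :: t) ≠ 0 := by
  intro h
  have := coeff_gsum_head_pos m x t hs
  rw [h] at this; simp at this

lemma natDegree_gsum (m x : ℕ) (t : List ℕ) (hs : (x :: t).Pairwise (· ≥ ·)) :
    (gsum m (x :: t)).natDegree = x := by
  apply le_antisymm
  · apply Polynomial.natDegree_sum_le_of_forall_le
    intro i _
    rw [binomPoly_natDegree]
    cases i with
    | zero => exact le_refl x
    | succ n => exact getD_le_head x t hs n
  · exact Polynomial.le_natDegree_of_ne_zero (ne_of_gt (coeff_gsum_head_pos m x t hs))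

lemma gsum_injective : ∀ (a : List ℕ) (b : List ℕ) (m : ℕ),
    a.Pairwise (· ≥ ·) → b.Pairwise (· ≥ ·) → gsum m a = gsum m b → a = b := by
  intro a
  induction a with
  | nil =>
    intro b m _ hb h
    cases b with
    | nil => rfl
    | cons y u =>
      rw [gsum_nil] at h
      exact absurd h.symm (gsum_ne_zero m y u hb)
  | cons x t ih =>
    intro b m ha hb h
    cases b with
    | nil =>
      rw [gsum_nil] at h
      exact absurd h (gsum_ne_zero m x t ha)
    | cons y u =>
      have hxy : x = y := by
        rw [← natDegree_gsum m x t ha, ← natDegree_gsum m y u hb, h]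
      subst hxy
      rw [gsum_cons, gsum_cons] at h
      have h2 : gsum (m+1) t = gsum (m+1) u := by
        exact add_left_cancel h
      rw [ih u (m+1) (List.pairwise_cons.mp ha).2 (List.pairwise_cons.mp hb).2 h2]


lemma rep_eq_gsum (a : List ℕ) :
    (∑ i ∈ Finset.range a.length, binomPoly ((a.getD i 0 : ℤ) - (i : ℤ)) (a.getD i 0))
      = gsum 0 a := by
  unfold gsum
  apply Finset.sum_congr rfl
  intro i _
  congr 1

/-- Gotzmann representations are unique: if `a_1 ≥ ⋯ ≥ a_s ≥ 0` and
`b_1 ≥ ⋯ ≥ b_t ≥ 0` give `∑_{i=1}^s C(d + a_i - (i-1), a_i) = ∑_{i=1}^t C(d + b_i - (i-1), b_i)`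
as polynomials in `d`, then `s = t` and `a_i = b_i` for all `i`. -/
theorem gotzmann_rep_unique (P : Polynomial ℚ) (a b : List ℕ)
    (ha : IsGotzmannRep P a) (hb : IsGotzmannRep P b) : a = b := by
  obtain ⟨hsa, hpa⟩ := ha
  obtain ⟨hsb, hpb⟩ := hb
  apply gsum_injective a b 0 hsa hsb
  rw [← rep_eq_gsum, ← rep_eq_gsum, ← hpa, ← hpb]
end
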